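/- arXiv:2111.04899 — 2 statements merged into one kernel-verified Lean document; each statement's English description precedes it below -/
import Mathlib

section
/- Let m = e(S_n) with m ≥ 2, let e = gcd of the elements of S_n, and let (α_1, …, α_{m−1}) be the unique residual (m−1)-tuple such that s_0/e = 1 + ∑_{j=1}^{m−1} α_j·R_j. Then Ap(S_n, s_0) = { ∑_{j=1}^{m−1} β_j·s_j : (β_1, …, β_{m−1}) is a residual (m−1)-tuple with (β_1, …, β_{m−1}) ≤_c (α_1, …, α_{m−1}) }. -/
/-- The minimal generating set of a submonoid `M` of ℕ: the nonzero elements of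
`M` that cannot be written as a sum of two nonzero elements of `M`. -/
def minGens (M : AddSubmonoid ℕ) : Set ℕ :=
  {x | x ∈ M ∧ x ≠ 0 ∧ ¬∃ y ∈ M, ∃ z ∈ M, y ≠ 0 ∧ z ≠ 0 ∧ x = y + z}

/-- The embedding dimension `e(M)`: the number of minimal generators of `M`. -/
noncomputable def edim (M : AddSubmonoid ℕ) : ℕ := (minGens M).ncard

/-- The Apéry set of `x` in `S`: the elements of `S` that cannot be written as
`x + s` with `s ∈ S`. -/
def apery (S : AddSubmonoid ℕ) (x : ℕ) : Set ℕ :=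
  {m | m ∈ S ∧ ¬∃ s ∈ S, m = x + s}

/-- A residual `r`-tuple `(α_1, …, α_r)` (here `α i` encodes `α_{i+1}`):
`0 ≤ α_i ≤ a` for all `i`, and if `α_i = a` for some `i ∈ {2, …, r}`, then
`α_j = 0` for all `j < i`. -/
def IsResidual (a : ℕ) {r : ℕ} (α : Fin r → ℕ) : Prop :=
  (∀ i, α i ≤ a) ∧ ∀ i j : Fin r, α i = a → 1 ≤ (i : ℕ) → j < i → α j = 0

/-- The strict co-lexicographic order: `α <_c β` iff there is an index `t` with
`α_t < β_t` and `α_j = β_j` for all `j > t`. -/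
def ColexLt {r : ℕ} (α β : Fin r → ℕ) : Prop :=
  ∃ t : Fin r, α t < β t ∧ ∀ j : Fin r, t < j → α j = β j

/-- The co-lexicographic order: `α ≤_c β` iff `α = β` or `α <_c β`. -/
def ColexLe {r : ℕ} (α β : Fin r → ℕ) : Prop := α = β ∨ ColexLt α β

namespace Stmt18Aux

/-- Repunit in base `a`. -/
def Ru (a j : ℕ) : ℕ := ∑ i ∈ Finset.range j, a ^ i

lemma Ru_zero (a : ℕ) : Ru a 0 = 0 := rfl

lemma Ru_succ (a j : ℕ) : Ru a (j + 1) = a * Ru a j + 1 := by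
  unfold Ru
  rw [Finset.sum_range_succ']
  simp [pow_succ, Finset.mul_sum, mul_comm]

lemma Ru_one (a : ℕ) : Ru a 1 = 1 := by simp [Ru_succ, Ru_zero]

lemma Ru_pred (a p : ℕ) (hp : 1 ≤ p) : Ru a p = a * Ru a (p - 1) + 1 := by
  obtain ⟨k, rfl⟩ : ∃ k, p = k + 1 := ⟨p - 1, by omega⟩
  simp [Ru_succ]

lemma Ru_pos (a p : ℕ) (hp : 1 ≤ p) : 1 ≤ Ru a p := by
  rw [Ru_pred a p hp]; omega

lemma Ru_strictMono (a : ℕ) (ha : 1 ≤ a) : StrictMono (Ru a) := by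
  apply strictMono_nat_of_lt_succ
  intro n
  rw [Ru_succ]
  have : Ru a n ≤ a * Ru a n := Nat.le_mul_of_pos_left _ (by omega)
  omega

lemma self_le_Ru (a : ℕ) (ha : 1 ≤ a) (p : ℕ) : p ≤ Ru a p := by
  induction p with
  | zero => simp [Ru_zero]
  | succ k ihk =>
    rw [Ru_succ]
    have : Ru a k ≤ a * Ru a k := Nat.le_mul_of_pos_left _ (by omega)
    omega

lemma Ru_id1 (a p : ℕ) (hp : 1 ≤ p) :
    (a + 1) * Ru a p = Ru a (p + 1) + a * Ru a (p - 1) := by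
  rw [Ru_succ, Ru_pred a p hp]
  ring

lemma Ru_id2 (a p q : ℕ) (hp : 1 ≤ p) (hq : 1 ≤ q) :
    a * Ru a p + Ru a q = Ru a (p + 1) + a * Ru a (q - 1) := by
  rw [Ru_succ, Ru_pred a q hq]
  ring

/-- Value of a multiset of repunit positions. -/
def mval (a : ℕ) (M : Multiset ℕ) : ℕ := (M.map (Ru a)).sum

lemma mval_add (a : ℕ) (M N : Multiset ℕ) : mval a (M + N) = mval a M + mval a N := by
  simp [mval]

lemma mval_cons (a p : ℕ) (M : Multiset ℕ) : mval a (p ::ₘ M) = Ru a p + mval a M := by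
  simp [mval]

lemma mval_replicate (a k p : ℕ) : mval a (Multiset.replicate k p) = k * Ru a p := by
  simp [mval, Multiset.map_replicate, Multiset.sum_replicate, smul_eq_mul]

/-- Residual condition for multisets of positions. -/
def mres (a : ℕ) (M : Multiset ℕ) : Prop :=
  (∀ p, M.count p ≤ a) ∧ ∀ p q, M.count p = a → 2 ≤ p → q < p → M.count q = 0

lemma normalize (a : ℕ) (ha : 2 ≤ a) :
    ∀ (w : ℕ) (M : Multiset ℕ), M.sum ≤ w → 0 ∉ M →
      ∃ M' : Multiset ℕ, 0 ∉ M' ∧ mres a M' ∧ mval a M' = mval a M ∧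
        Multiset.card M' ≤ Multiset.card M := by
  intro w
  induction w using Nat.strong_induction_on with
  | _ w ih =>
    intro M hw h0
    by_cases hres : mres a M
    · exact ⟨M, h0, hres, rfl, le_rfl⟩
    have hcnt0 : M.count 0 = 0 := Multiset.count_eq_zero.mpr h0
    by_cases hA : ∀ p, M.count p ≤ a
    · -- second type of violation
      have hviol : ∃ p q, M.count p = a ∧ 2 ≤ p ∧ q < p ∧ M.count q ≠ 0 := by
        unfold mres at hres
        push_neg at hres
        exact hres hA
      obtain ⟨p, q, hpa, hp2, hqp, hq0⟩ := hviol
      have hq1 : 1 ≤ q := by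
        rcases Nat.eq_zero_or_pos q with h | h
        · exact absurd (h ▸ hcnt0) hq0
        · exact h
      have hqnep : q ≠ p := by omega
      set A : Multiset ℕ := q ::ₘ Multiset.replicate a p with hA_def
      have hle : A ≤ M := by
        rw [Multiset.le_iff_count]
        intro x
        rw [hA_def, Multiset.count_cons, Multiset.count_replicate]
        by_cases hx : x = q
        · subst hx
          simp [hqnep, Ne.symm hqnep]
          omega
        · by_cases hxp : x = p
          · subst hxp
            simp [hx, Ne.symm hqnep]
            omega
          · simp [hx, hxp, Ne.symm hx, Ne.symm hxp]
      set T : Multiset ℕ := M - A with hT_def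
      have hM : M = T + A := by rw [hT_def]; exact (tsub_add_cancel_of_le hle).symm
      have h0T : 0 ∉ T := fun h => h0 (Multiset.mem_of_le tsub_le_self h)
      have hsumM : M.sum = T.sum + (q + a * p) := by
        rw [hM, Multiset.sum_add, hA_def, Multiset.sum_cons, Multiset.sum_replicate,
          smul_eq_mul]
      have hvalM : mval a M = mval a T + (Ru a q + a * Ru a p) := by
        rw [hM, mval_add, hA_def, mval_cons, mval_replicate]
      have hcardM : Multiset.card M = Multiset.card T + (a + 1) := by
        rw [hM, Multiset.card_add, hA_def, Multiset.card_cons, Multiset.card_replicate]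
      by_cases hq2 : 2 ≤ q
      · set M₂ : Multiset ℕ := (p + 1) ::ₘ (Multiset.replicate a (q - 1) + T) with hM₂
        have h0M₂ : 0 ∉ M₂ := by
          rw [hM₂]
          intro h
          rcases Multiset.mem_cons.mp h with h | h
          · omega
          · rcases Multiset.mem_add.mp h with h | h
            · have := Multiset.eq_of_mem_replicate h; omega
            · exact h0T h
        have hsum₂ : M₂.sum = (p + 1) + (a * (q - 1) + T.sum) := by
          rw [hM₂, Multiset.sum_cons, Multiset.sum_add, Multiset.sum_replicate, smul_eq_mul]
        have hsumlt : M₂.sum < M.sum := by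
          rw [hsum₂, hsumM]
          have h1 : a * (q - 1) + a = a * q := by
            have h : q - 1 + 1 = q := by omega
            calc a * (q - 1) + a = a * (q - 1 + 1) := by ring
              _ = a * q := by rw [h]
          have h2 : a * q + a * (p - q - 1) + a = a * p := by
            have h : q + (p - q - 1) + 1 = p := by omega
            calc a * q + a * (p - q - 1) + a = a * (q + (p - q - 1) + 1) := by ring
              _ = a * p := by rw [h]
          have h3 : p - q - 1 ≤ a * (p - q - 1) := Nat.le_mul_of_pos_left _ (by omega)
          omega
        have hval₂ : mval a M₂ = mval a M := by
          rw [hM₂, mval_cons, mval_add, mval_replicate, hvalM]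
          have hid := Ru_id2 a p q (by omega) hq1
          omega
        have hcard₂ : Multiset.card M₂ ≤ Multiset.card M := by
          rw [hM₂, Multiset.card_cons, Multiset.card_add, Multiset.card_replicate, hcardM]
          omega
        obtain ⟨M', h1, h2, h3, h4⟩ := ih M₂.sum (by omega) M₂ le_rfl h0M₂
        exact ⟨M', h1, h2, by rw [h3, hval₂], by omega⟩
      · -- q = 1
        have hq1' : q = 1 := by omega
        rw [hq1'] at hsumM hvalM
        set M₂ : Multiset ℕ := (p + 1) ::ₘ T with hM₂
        have h0M₂ : 0 ∉ M₂ := by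
          rw [hM₂]
          intro h
          rcases Multiset.mem_cons.mp h with h | h
          · omega
          · exact h0T h
        have hsum₂ : M₂.sum = (p + 1) + T.sum := by rw [hM₂, Multiset.sum_cons]
        have hsumlt : M₂.sum < M.sum := by
          rw [hsum₂, hsumM]
          have h1 : 2 * p ≤ a * p := Nat.mul_le_mul_right p (by omega)
          omega
        have hval₂ : mval a M₂ = mval a M := by
          rw [hM₂, mval_cons, hvalM]
          have hid := Ru_id2 a p 1 (by omega) (by omega)
          rw [Ru_one] at hid
          have hz : Ru a (1 - 1) = 0 := Ru_zero a
          rw [hz] at hid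
          rw [Ru_one]
          omega
        have hcard₂ : Multiset.card M₂ ≤ Multiset.card M := by
          rw [hM₂, Multiset.card_cons, hcardM]
          omega
        obtain ⟨M', h1, h2, h3, h4⟩ := ih M₂.sum (by omega) M₂ le_rfl h0M₂
        exact ⟨M', h1, h2, by rw [h3, hval₂], by omega⟩
    · -- first type: some count exceeds a
      push_neg at hA
      obtain ⟨p, hpa⟩ := hA
      have hp1 : 1 ≤ p := by
        rcases Nat.eq_zero_or_pos p with h | h
        · subst h; omega
        · exact h
      set A : Multiset ℕ := Multiset.replicate (a + 1) p with hA_def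
      have hle : A ≤ M := by
        rw [Multiset.le_iff_count]
        intro x
        rw [hA_def, Multiset.count_replicate]
        by_cases hx : x = p
        · subst hx; simp; omega
        · simp [hx, Ne.symm hx]
      set T : Multiset ℕ := M - A with hT_def
      have hM : M = T + A := by rw [hT_def]; exact (tsub_add_cancel_of_le hle).symm
      have h0T : 0 ∉ T := fun h => h0 (Multiset.mem_of_le tsub_le_self h)
      have hsumM : M.sum = T.sum + (a + 1) * p := by
        rw [hM, Multiset.sum_add, hA_def, Multiset.sum_replicate, smul_eq_mul]
      have hvalM : mval a M = mval a T + (a + 1) * Ru a p := by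
        rw [hM, mval_add, hA_def, mval_replicate]
      have hcardM : Multiset.card M = Multiset.card T + (a + 1) := by
        rw [hM, Multiset.card_add, hA_def, Multiset.card_replicate]
      by_cases hp2 : 2 ≤ p
      · set M₂ : Multiset ℕ := (p + 1) ::ₘ (Multiset.replicate a (p - 1) + T) with hM₂
        have h0M₂ : 0 ∉ M₂ := by
          rw [hM₂]
          intro h
          rcases Multiset.mem_cons.mp h with h | h
          · omega
          · rcases Multiset.mem_add.mp h with h | h
            · have := Multiset.eq_of_mem_replicate h; omega
            · exact h0T h
        have hsum₂ : M₂.sum = (p + 1) + (a * (p - 1) + T.sum) := by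
          rw [hM₂, Multiset.sum_cons, Multiset.sum_add, Multiset.sum_replicate, smul_eq_mul]
        have hsumlt : M₂.sum < M.sum := by
          rw [hsum₂, hsumM]
          have h1 : a * (p - 1) + a = a * p := by
            have h : p - 1 + 1 = p := by omega
            calc a * (p - 1) + a = a * (p - 1 + 1) := by ring
              _ = a * p := by rw [h]
          have h2 : (a + 1) * p = a * p + p := by ring
          omega
        have hval₂ : mval a M₂ = mval a M := by
          rw [hM₂, mval_cons, mval_add, mval_replicate, hvalM]
          have hid := Ru_id1 a p hp1
          omega
        have hcard₂ : Multiset.card M₂ ≤ Multiset.card M := by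
          rw [hM₂, Multiset.card_cons, Multiset.card_add, Multiset.card_replicate, hcardM]
          omega
        obtain ⟨M', h1, h2, h3, h4⟩ := ih M₂.sum (by omega) M₂ le_rfl h0M₂
        exact ⟨M', h1, h2, by rw [h3, hval₂], by omega⟩
      · -- p = 1
        have hp1' : p = 1 := by omega
        rw [hp1'] at hsumM hvalM
        set M₂ : Multiset ℕ := 2 ::ₘ T with hM₂
        have h0M₂ : 0 ∉ M₂ := by
          rw [hM₂]
          intro h
          rcases Multiset.mem_cons.mp h with h | h
          · omega
          · exact h0T h
        have hsum₂ : M₂.sum = 2 + T.sum := by rw [hM₂, Multiset.sum_cons]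
        have hsumlt : M₂.sum < M.sum := by
          rw [hsum₂, hsumM]
          have h1 : (a + 1) * 1 = a + 1 := by ring
          omega
        have hval₂ : mval a M₂ = mval a M := by
          rw [hM₂, mval_cons, hvalM, Ru_one]
          have h2 : Ru a 2 = a + 1 := by rw [Ru_succ, Ru_one]; omega
          have h3 : (a + 1) * 1 = a + 1 := by ring
          omega
        have hcard₂ : Multiset.card M₂ ≤ Multiset.card M := by
          rw [hM₂, Multiset.card_cons, hcardM]
          omega
        obtain ⟨M', h1, h2, h3, h4⟩ := ih M₂.sum (by omega) M₂ le_rfl h0M₂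
        exact ⟨M', h1, h2, by rw [h3, hval₂], by omega⟩

/-- Bound: a residual digit function has value `< Ru a N`. -/
lemma residF_bound (a : ℕ) (ha : 2 ≤ a) (f : ℕ → ℕ)
    (h1 : ∀ p, f p ≤ a)
    (h2 : ∀ p q, f p = a → 2 ≤ p → q < p → f q = 0)
    (hf0 : f 0 = 0) :
    ∀ N, 1 ≤ N → (∑ p ∈ Finset.range N, f p * Ru a p) + 1 ≤ Ru a N := by
  intro N hN1
  induction N, hN1 using Nat.le_induction with
  | base =>
    simp [Ru_one, hf0, Ru_zero]
  | succ N hN ihN =>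
    rw [Finset.sum_range_succ, Ru_succ]
    by_cases hfN : f N = a
    · have hS0 : ∑ p ∈ Finset.range N, f p * Ru a p = 0 := by
        apply Finset.sum_eq_zero
        intro q hq
        rcases Nat.lt_or_ge N 2 with h | h
        · -- N = 1, so q = 0
          have : q = 0 := by
            have := Finset.mem_range.mp hq; omega
          rw [this, hf0]; ring
        · rw [h2 N q hfN h (Finset.mem_range.mp hq)]; ring
      rw [hS0, hfN]
      omega
    · have hflt : f N ≤ a - 1 := by have := h1 N; omega
      have hle : f N * Ru a N ≤ (a - 1) * Ru a N := Nat.mul_le_mul_right _ hflt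
      have hsub : (a - 1) * Ru a N + Ru a N = a * Ru a N := by
        have h : a - 1 + 1 = a := by omega
        calc (a - 1) * Ru a N + Ru a N = (a - 1 + 1) * Ru a N := by ring
          _ = a * Ru a N := by rw [h]
      have hih := ihN
      omega

/-- Strict monotonicity of value along "largest differing digit". -/
lemma residF_lt (a N : ℕ) (ha : 2 ≤ a) (f g : ℕ → ℕ)
    (h1 : ∀ p, f p ≤ a) (h2 : ∀ p q, f p = a → 2 ≤ p → q < p → f q = 0) (hf0 : f 0 = 0)
    (t : ℕ) (ht1 : 1 ≤ t) (htN : t < N)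
    (hlt : f t < g t) (hag : ∀ q, t < q → q < N → f q = g q) :
    ∑ p ∈ Finset.range N, f p * Ru a p < ∑ p ∈ Finset.range N, g p * Ru a p := by
  have hsplitf : ∑ p ∈ Finset.range N, f p * Ru a p
      = ∑ p ∈ Finset.range (t + 1), f p * Ru a p
        + ∑ p ∈ Finset.Ico (t + 1) N, f p * Ru a p := by
    simp only [Finset.range_eq_Ico]
    exact (Finset.sum_Ico_consecutive _ (by omega) (by omega)).symm
  have hsplitg : ∑ p ∈ Finset.range N, g p * Ru a p
      = ∑ p ∈ Finset.range (t + 1), g p * Ru a p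
        + ∑ p ∈ Finset.Ico (t + 1) N, g p * Ru a p := by
    simp only [Finset.range_eq_Ico]
    exact (Finset.sum_Ico_consecutive _ (by omega) (by omega)).symm
  have htail : ∑ p ∈ Finset.Ico (t + 1) N, f p * Ru a p
      = ∑ p ∈ Finset.Ico (t + 1) N, g p * Ru a p := by
    apply Finset.sum_congr rfl
    intro q hq
    have := Finset.mem_Ico.mp hq
    rw [hag q (by omega) (by omega)]
  have hhead : ∑ p ∈ Finset.range (t + 1), f p * Ru a p
      < ∑ p ∈ Finset.range (t + 1), g p * Ru a p := by
    rw [Finset.sum_range_succ, Finset.sum_range_succ]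
    have hb := residF_bound a ha f h1 h2 hf0 t ht1
    have hmul : (f t + 1) * Ru a t ≤ g t * Ru a t := Nat.mul_le_mul_right _ (by omega)
    have hexp : (f t + 1) * Ru a t = f t * Ru a t + Ru a t := by ring
    have hpos : 0 ≤ ∑ p ∈ Finset.range t, g p * Ru a p := Nat.zero_le _
    omega
  omega

/-- Uniqueness of residual digit functions with equal value. -/
lemma residF_eq (a N : ℕ) (ha : 2 ≤ a) (f g : ℕ → ℕ)
    (hf1 : ∀ p, f p ≤ a) (hf2 : ∀ p q, f p = a → 2 ≤ p → q < p → f q = 0) (hf0 : f 0 = 0)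
    (hg1 : ∀ p, g p ≤ a) (hg2 : ∀ p q, g p = a → 2 ≤ p → q < p → g q = 0) (hg0 : g 0 = 0)
    (hsum : ∑ p ∈ Finset.range N, f p * Ru a p = ∑ p ∈ Finset.range N, g p * Ru a p) :
    ∀ p, p < N → f p = g p := by
  by_contra hne
  push_neg at hne
  obtain ⟨p₀, hp₀N, hp₀⟩ := hne
  have hDne : ((Finset.range N).filter (fun p => f p ≠ g p)).Nonempty :=
    ⟨p₀, Finset.mem_filter.mpr ⟨Finset.mem_range.mpr hp₀N, hp₀⟩⟩
  set t := ((Finset.range N).filter (fun p => f p ≠ g p)).max' hDne with ht_def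
  have htmem := ((Finset.range N).filter (fun p => f p ≠ g p)).max'_mem hDne
  have htN : t < N := Finset.mem_range.mp (Finset.mem_filter.mp htmem).1
  have htne : f t ≠ g t := (Finset.mem_filter.mp htmem).2
  have ht1 : 1 ≤ t := by
    rcases Nat.eq_zero_or_pos t with h | h
    · rw [h] at htne; rw [hf0, hg0] at htne; omega
    · exact h
  have hag : ∀ q, t < q → q < N → f q = g q := by
    intro q hq hqN
    by_contra hqne
    have : q ∈ (Finset.range N).filter (fun p => f p ≠ g p) :=
      Finset.mem_filter.mpr ⟨Finset.mem_range.mpr hqN, hqne⟩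
    have := Finset.le_max' _ q this
    omega
  rcases Nat.lt_or_ge (f t) (g t) with h | h
  · have := residF_lt a N ha f g hf1 hf2 hf0 t ht1 htN h hag
    omega
  · have hgt : g t < f t := by omega
    have := residF_lt a N ha g f hg1 hg2 hg0 t ht1 htN hgt
      (fun q h1 h2 => (hag q h1 h2).symm)
    omega

lemma le_mval_of_mem (a p : ℕ) (M : Multiset ℕ) (h : p ∈ M) : Ru a p ≤ mval a M := by
  unfold mval
  exact Multiset.single_le_sum (fun x _ => Nat.zero_le x) _
    (Multiset.mem_map_of_mem (Ru a) h)

lemma mval_eq_sum (a N : ℕ) (M : Multiset ℕ) (hN : ∀ p ∈ M, p < N) :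
    mval a M = ∑ p ∈ Finset.range N, M.count p * Ru a p := by
  unfold mval
  rw [Finset.sum_multiset_map_count]
  apply Finset.sum_subset
  · intro x hx
    exact Finset.mem_range.mpr (hN x (Multiset.mem_toFinset.mp hx))
  · intro x _ hx
    rw [Multiset.count_eq_zero.mpr (fun h => hx (Multiset.mem_toFinset.mpr h))]
    simp

lemma card_eq_sum (N : ℕ) (M : Multiset ℕ) (hN : ∀ p ∈ M, p < N) :
    Multiset.card M = ∑ p ∈ Finset.range N, M.count p := by
  rw [← Multiset.toFinset_sum_count_eq]
  apply Finset.sum_subset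
  · intro x hx
    exact Finset.mem_range.mpr (hN x (Multiset.mem_toFinset.mp hx))
  · intro x _ hx
    exact Multiset.count_eq_zero.mpr (fun h => hx (Multiset.mem_toFinset.mpr h))

lemma mval_finsum (a : ℕ) {ι : Type*} (s : Finset ι) (F : ι → Multiset ℕ) :
    mval a (∑ i ∈ s, F i) = ∑ i ∈ s, mval a (F i) := by
  classical
  induction s using Finset.cons_induction with
  | empty => simp [mval]
  | cons i s hi ihs => rw [Finset.sum_cons, Finset.sum_cons, mval_add, ihs]

lemma card_finsum {ι : Type*} (s : Finset ι) (F : ι → Multiset ℕ) :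
    Multiset.card (∑ i ∈ s, F i) = ∑ i ∈ s, Multiset.card (F i) := by
  classical
  induction s using Finset.cons_induction with
  | empty => simp
  | cons i s hi ihs => rw [Finset.sum_cons, Finset.sum_cons, Multiset.card_add, ihs]

end Stmt18Aux

namespace Stmt18Aux

def fof {r : ℕ} (β : Fin r → ℕ) (p : ℕ) : ℕ :=
  if h : 1 ≤ p ∧ p ≤ r then β ⟨p - 1, by omega⟩ else 0

lemma fof_zero {r : ℕ} (β : Fin r → ℕ) : fof β 0 = 0 := by simp [fof]

lemma fof_gt {r : ℕ} (β : Fin r → ℕ) (p : ℕ) (hp : r < p) : fof β p = 0 := by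
  rw [fof, dif_neg]; omega

lemma fof_idx {r : ℕ} (β : Fin r → ℕ) (i : Fin r) : fof β ((i : ℕ) + 1) = β i := by
  have h : 1 ≤ (i : ℕ) + 1 ∧ (i : ℕ) + 1 ≤ r := ⟨by omega, by have := i.isLt; omega⟩
  rw [fof, dif_pos h]
  exact congrArg β (Fin.ext (by simp))

lemma fof_resid {a r : ℕ} (ha : 2 ≤ a) (β : Fin r → ℕ) (hβ : IsResidual a β) :
    (∀ p, fof β p ≤ a) ∧ ∀ p q, fof β p = a → 2 ≤ p → q < p → fof β q = 0 := by
  constructor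
  · intro p
    rw [fof]
    split
    · exact hβ.1 _
    · omega
  · intro p q hpa hp2 hqp
    have hpr : 1 ≤ p ∧ p ≤ r := by
      by_contra h
      rw [fof, dif_neg h] at hpa
      omega
    rw [fof, dif_pos hpr] at hpa
    rcases Nat.eq_zero_or_pos q with hq | hq
    · rw [hq]; exact fof_zero β
    · have hqr : 1 ≤ q ∧ q ≤ r := ⟨hq, by omega⟩
      rw [fof, dif_pos hqr]
      exact hβ.2 ⟨p - 1, by omega⟩ ⟨q - 1, by omega⟩ hpa (by simp; omega)
        (Fin.mk_lt_mk.mpr (by omega))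

lemma fof_bridge {r : ℕ} (β : Fin r → ℕ) (F : ℕ → ℕ) (N : ℕ) (hN : r + 1 ≤ N) :
    ∑ p ∈ Finset.range N, fof β p * F p = ∑ i : Fin r, β i * F ((i : ℕ) + 1) := by
  have h1 : ∑ p ∈ Finset.range N, fof β p * F p
      = ∑ p ∈ Finset.range (r + 1), fof β p * F p := by
    symm
    apply Finset.sum_subset (Finset.range_subset_range.mpr hN)
    intro x _ hx'
    have hx : r < x := by
      by_contra h
      exact hx' (Finset.mem_range.mpr (by omega))
    rw [fof_gt β x hx, zero_mul]
  rw [h1, Finset.sum_range_succ' (fun p => fof β p * F p) r]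
  simp only [fof_zero, zero_mul, add_zero]
  rw [← Fin.sum_univ_eq_sum_range (fun k => fof β (k + 1) * F (k + 1)) r]
  exact Finset.sum_congr rfl (fun i _ => by rw [fof_idx])

lemma fof_bridge1 {r : ℕ} (β : Fin r → ℕ) (N : ℕ) (hN : r + 1 ≤ N) :
    ∑ p ∈ Finset.range N, fof β p = ∑ i : Fin r, β i := by
  have h1 : ∑ p ∈ Finset.range N, fof β p = ∑ p ∈ Finset.range (r + 1), fof β p := by
    symm
    apply Finset.sum_subset (Finset.range_subset_range.mpr hN)
    intro x _ hx'
    have hx : r < x := by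
      by_contra h
      exact hx' (Finset.mem_range.mpr (by omega))
    exact fof_gt β x hx
  rw [h1, Finset.sum_range_succ' (fun p => fof β p) r]
  simp only [fof_zero, add_zero]
  rw [← Fin.sum_univ_eq_sum_range (fun k => fof β (k + 1)) r]
  exact Finset.sum_congr rfl (fun i _ => by rw [fof_idx])

end Stmt18Aux


open Stmt18Aux

/-- let `m = e(S_n)` with `m ≥ 2`, let `e` be the gcd of the
elements of `S_n`, and let `(α_1, …, α_{m−1})` be the residual `(m−1)`-tuple
with `s_0/e = 1 + ∑_{j=1}^{m−1} α_j·R_j`. Then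
`Ap(S_n, s_0) = {∑_{j=1}^{m−1} β_j·s_j : (β_1, …, β_{m−1})` residual, `≤_c (α_1, …, α_{m−1})}`. -/
theorem stmt_18 (a c d n : ℕ) (ha : 2 ≤ a) (hc : 0 < c) (hd : 0 < d)
    (hdca : d < c * a) (hda : Nat.Coprime d a) (hdc : Nat.Coprime d c) (hn : 0 < n)
    (s : ℕ → ℕ) (hs : ∀ j, s j = c * a ^ (n + j) - d)
    (R : ℕ → ℕ) (hR : ∀ j, R j = (a ^ j - 1) / (a - 1))
    (e : ℕ)
    (he1 : ∀ x ∈ AddSubmonoid.closure (Set.range s), e ∣ x)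
    (he2 : ∀ k : ℕ, (∀ x ∈ AddSubmonoid.closure (Set.range s), k ∣ x) → k ∣ e)
    (m : ℕ) (hm2 : 2 ≤ m)
    (hm : edim (AddSubmonoid.closure (Set.range s)) = m)
    (α : Fin (m - 1) → ℕ) (hα : IsResidual a α)
    (hα0 : s 0 / e = 1 + ∑ i : Fin (m - 1), α i * R ((i : ℕ) + 1)) :
    apery (AddSubmonoid.closure (Set.range s)) (s 0) =
      {x | ∃ β : Fin (m - 1) → ℕ, IsResidual a β ∧ ColexLe β α ∧
        x = ∑ i : Fin (m - 1), β i * s ((i : ℕ) + 1)} := by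
  classical
  set S := AddSubmonoid.closure (Set.range s) with hS_def
  -- ============ basic arithmetic facts ============
  have hpow : ∀ j, d ≤ c * a ^ (n + j) := by
    intro j
    have h1 : a ≤ a ^ (n + j) := Nat.le_self_pow (by omega) a
    calc d ≤ c * a := le_of_lt hdca
      _ ≤ c * a ^ (n + j) := Nat.mul_le_mul_left c h1
  have hsd : ∀ j, s j + d = c * a ^ (n + j) := by
    intro j
    rw [hs j]
    exact Nat.sub_add_cancel (hpow j)
  have hs0pos : 0 < s 0 := by
    have h0 := hsd 0
    have h1 : a ≤ a ^ (n + 0) := Nat.le_self_pow (by omega) a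
    have h2 : c * a ≤ c * a ^ (n + 0) := Nat.mul_le_mul_left c h1
    omega
  set Q1 := (a - 1) * (s 0 + d) with hQ1_def
  have hRu_pow : ∀ j, (a - 1) * Ru a j + 1 = a ^ j := by
    intro j
    induction j with
    | zero => simp [Ru_zero]
    | succ k ihk =>
      rw [Ru_succ, pow_succ, ← ihk]
      have h : a - 1 + 1 = a := by omega
      calc (a - 1) * (a * Ru a k + 1) + 1
          = (a - 1) * Ru a k * a + (a - 1 + 1) := by ring
        _ = (a - 1) * Ru a k * a + a := by rw [h]
        _ = ((a - 1) * Ru a k + 1) * a := by ring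
  have hsj : ∀ j, s j = s 0 + Q1 * Ru a j := by
    intro j
    have h1 : s j + d = (s 0 + d) * a ^ j := by
      rw [hsd j, hsd 0, show n + j = (n + 0) + j by omega, pow_add, ← mul_assoc]
    have h2 : (s 0 + d) * ((a - 1) * Ru a j + 1) = (s 0 + d) * a ^ j := by
      rw [hRu_pow j]
    have h3 : (s 0 + d) * ((a - 1) * Ru a j + 1) = (s 0 + d) + Q1 * Ru a j := by
      rw [hQ1_def]; ring
    omega
  have hSmem : ∀ j, s j ∈ S := fun j => AddSubmonoid.subset_closure ⟨j, rfl⟩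
  have hes0 : e ∣ s 0 := he1 _ (hSmem 0)
  have hepos : 0 < e := by
    rcases Nat.eq_zero_or_pos e with h | h
    · exfalso
      rw [h] at hes0
      simp at hes0
      omega
    · exact h
  have hcop_s0_d : Nat.gcd (s 0) d = 1 := by
    have hco : Nat.Coprime d (c * a ^ n) :=
      Nat.Coprime.mul_right hdc (Nat.Coprime.pow_right n hda)
    have h1 : Nat.gcd (s 0) d ∣ d := Nat.gcd_dvd_right _ _
    have h2 : Nat.gcd (s 0) d ∣ c * a ^ n := by
      have h3 : Nat.gcd (s 0) d ∣ s 0 + d := Dvd.dvd.add (Nat.gcd_dvd_left _ _) h1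
      have h4 := hsd 0
      rw [Nat.add_zero] at h4
      rwa [h4] at h3
    have h5 : Nat.gcd (s 0) d ∣ Nat.gcd d (c * a ^ n) := Nat.dvd_gcd h1 h2
    rw [Nat.Coprime.gcd_eq_one hco] at h5
    exact Nat.dvd_one.mp h5
  have hs0_sd : Nat.Coprime (s 0) (s 0 + d) := by
    rw [add_comm]
    exact (Nat.coprime_add_self_right).mpr hcop_s0_d
  have hQ1e : e ∣ Q1 := by
    have h1 : e ∣ s 1 := he1 _ (hSmem 1)
    rw [hsj 1, Ru_one, mul_one] at h1
    exact (Nat.dvd_add_right hes0).mp h1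
  have hea1 : e ∣ a - 1 := by
    have hcoe : Nat.Coprime e (s 0 + d) := Nat.Coprime.coprime_dvd_left hes0 hs0_sd
    exact hcoe.dvd_of_dvd_mul_right (hQ1_def ▸ hQ1e)
  have hE : Nat.gcd (s 0) (a - 1) = e := by
    apply Nat.dvd_antisymm
    · apply he2
      intro x hx
      induction hx using AddSubmonoid.closure_induction with
      | mem x hxx =>
        obtain ⟨j, rfl⟩ := hxx
        rw [hsj j, hQ1_def]
        exact dvd_add (Nat.gcd_dvd_left _ _)
          (dvd_mul_of_dvd_left (dvd_mul_of_dvd_left (Nat.gcd_dvd_right _ _) _) _)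
      | zero => exact dvd_zero _
      | add x y hx hy ihx ihy => exact dvd_add ihx ihy
    · exact Nat.dvd_gcd hes0 hea1
  set P := s 0 / e with hP_def
  have hPe : e * P = s 0 := Nat.mul_div_cancel' hes0
  have hPpos : 0 < P := by
    rcases Nat.eq_zero_or_pos P with h | h
    · rw [h, Nat.mul_zero] at hPe; omega
    · exact h
  have hRRu : ∀ j, R j = Ru a j := by
    intro j
    rw [hR j]
    have h := hRu_pow j
    have h2 : a ^ j - 1 = (a - 1) * Ru a j := by omega
    rw [h2]
    exact Nat.mul_div_cancel_left _ (by omega)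
  have hPvα : P = 1 + ∑ i : Fin (m - 1), α i * Ru a ((i : ℕ) + 1) := by
    rw [hα0]
    congr 1
    exact Finset.sum_congr rfl (fun i _ => by rw [hRRu])
  set Q2 := ((a - 1) / e) * (s 0 + d) with hQ2_def
  have hQ1P : Q1 * P = Q2 * s 0 := by
    have h1 : (a - 1) / e * e = a - 1 := Nat.div_mul_cancel hea1
    calc Q1 * P = ((a - 1) / e * e) * ((s 0 + d) * P) := by rw [h1, hQ1_def]; ring
      _ = ((a - 1) / e * (s 0 + d)) * (e * P) := by ring
      _ = Q2 * s 0 := by rw [hPe, hQ2_def]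
  have hQ2geP : P ≤ Q2 := by
    have h1 : 1 ≤ (a - 1) / e := (Nat.one_le_div_iff hepos).mpr (Nat.le_of_dvd (by omega) hea1)
    have h2 : P ≤ s 0 := Nat.div_le_self _ _
    have h3 : 1 * (s 0 + d) ≤ (a - 1) / e * (s 0 + d) := Nat.mul_le_mul_right _ h1
    rw [one_mul] at h3
    rw [hQ2_def]
    omega
  -- ============ decomposition of elements of S ============
  have hext : ∀ (Nb Nc : ℕ) (g : ℕ → ℕ), Nb ≤ Nc →
      ∑ p ∈ Finset.range Nc, (if p < Nb then g p else 0) * s p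
        = ∑ p ∈ Finset.range Nb, g p * s p := by
    intro Nb Nc g hbc
    rw [← Finset.sum_subset (Finset.range_subset_range.mpr hbc) (fun x _ hx' => by
      rw [if_neg (fun h => hx' (Finset.mem_range.mpr h)), zero_mul])]
    exact Finset.sum_congr rfl (fun p hp => by rw [if_pos (Finset.mem_range.mp hp)])
  have hdecomp : ∀ x ∈ S, ∃ (N : ℕ) (g : ℕ → ℕ), x = ∑ p ∈ Finset.range N, g p * s p := by
    intro x hx
    induction hx using AddSubmonoid.closure_induction with
    | mem x hxx =>
      obtain ⟨j, rfl⟩ := hxx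
      refine ⟨j + 1, fun p => if p = j then 1 else 0, ?_⟩
      have h1 : ∀ p, (if p = j then 1 else 0) * s p = if p = j then s j else 0 := by
        intro p
        by_cases h : p = j
        · subst h; simp
        · simp [h]
      rw [Finset.sum_congr rfl (fun p _ => h1 p), Finset.sum_ite_eq' (Finset.range (j + 1)) j]
      simp
    | zero => exact ⟨0, fun _ => 0, by simp⟩
    | add x y hx hy ihx ihy =>
      obtain ⟨N₁, g₁, rfl⟩ := ihx
      obtain ⟨N₂, g₂, rfl⟩ := ihy
      refine ⟨max N₁ N₂, fun p => (if p < N₁ then g₁ p else 0) + (if p < N₂ then g₂ p else 0), ?_⟩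
      have h2 : ∀ p ∈ Finset.range (max N₁ N₂),
          ((if p < N₁ then g₁ p else 0) + (if p < N₂ then g₂ p else 0)) * s p
          = (if p < N₁ then g₁ p else 0) * s p + (if p < N₂ then g₂ p else 0) * s p := by
        intro p _; ring
      rw [Finset.sum_congr rfl h2, Finset.sum_add_distrib,
        hext N₁ (max N₁ N₂) g₁ (le_max_left _ _), hext N₂ (max N₁ N₂) g₂ (le_max_right _ _)]
  have hdecomp2 : ∀ x ∈ S, ∃ (L W N : ℕ) (g : ℕ → ℕ),
      x = L * s 0 + Q1 * W ∧ g 0 = 0 ∧ W = ∑ p ∈ Finset.range N, g p * Ru a p ∧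
      (∑ p ∈ Finset.range N, g p) ≤ L := by
    intro x hx
    obtain ⟨N, g, rfl⟩ := hdecomp x hx
    refine ⟨∑ p ∈ Finset.range N, g p,
      ∑ p ∈ Finset.range N, (if p = 0 then 0 else g p) * Ru a p, N,
      fun p => if p = 0 then 0 else g p, ?_, by simp, rfl, ?_⟩
    · have h1 : ∀ p, g p * s p = g p * s 0 + Q1 * ((if p = 0 then 0 else g p) * Ru a p) := by
        intro p
        rcases Nat.eq_zero_or_pos p with h | h
        · subst h; simp [Ru_zero]
        · rw [hsj p, if_neg (by omega)]; ring
      rw [Finset.sum_congr rfl (fun p _ => h1 p), Finset.sum_add_distrib,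
        ← Finset.sum_mul, ← Finset.mul_sum]
    · apply Finset.sum_le_sum
      intro p _
      split <;> omega
  have hwS : ∀ β : Fin (m - 1) → ℕ, (∑ i : Fin (m - 1), β i * s ((i : ℕ) + 1)) ∈ S := by
    intro β
    apply AddSubmonoid.sum_mem
    intro i _
    simpa using nsmul_mem (hSmem ((i : ℕ) + 1)) (β i)
  have hwβ : ∀ β : Fin (m - 1) → ℕ, ∑ i : Fin (m - 1), β i * s ((i : ℕ) + 1)
      = (∑ i : Fin (m - 1), β i) * s 0 + Q1 * (∑ i : Fin (m - 1), β i * Ru a ((i : ℕ) + 1)) := by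
    intro β
    have h1 : ∀ i : Fin (m - 1), β i * s ((i : ℕ) + 1)
        = β i * s 0 + Q1 * (β i * Ru a ((i : ℕ) + 1)) := by
      intro i; rw [hsj ((i : ℕ) + 1)]; ring
    rw [Finset.sum_congr rfl (fun i _ => h1 i), Finset.sum_add_distrib,
      ← Finset.sum_mul, ← Finset.mul_sum]
  -- ============ congruence cancellation ============
  have hcancel : ∀ u v : ℕ, (Q1 * u) % s 0 = (Q1 * v) % s 0 → u % P = v % P := by
    intro u v h
    have h1 : (s 0 + d) * ((a - 1) * u) ≡ (s 0 + d) * ((a - 1) * v) [MOD s 0] := by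
      have e1 : (s 0 + d) * ((a - 1) * u) = Q1 * u := by rw [hQ1_def]; ring
      have e2 : (s 0 + d) * ((a - 1) * v) = Q1 * v := by rw [hQ1_def]; ring
      rw [e1, e2]
      exact h
    have h2 : (a - 1) * u ≡ (a - 1) * v [MOD s 0] :=
      Nat.ModEq.cancel_left_of_coprime hs0_sd h1
    have h3 : u ≡ v [MOD s 0 / Nat.gcd (s 0) (a - 1)] :=
      Nat.ModEq.cancel_left_div_gcd hs0pos h2
    rw [hE] at h3
    exact h3
  -- ============ minimality ============
  have hmin : ∀ (N : ℕ) (g : ℕ → ℕ), g 0 = 0 → ∀ β : Fin (m - 1) → ℕ, IsResidual a β →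
      (∑ p ∈ Finset.range N, g p * Ru a p) = (∑ i : Fin (m - 1), β i * Ru a ((i : ℕ) + 1)) →
      (∑ i : Fin (m - 1), β i) ≤ ∑ p ∈ Finset.range N, g p := by
    intro N g hg0 β hβ hval
    set Mg : Multiset ℕ := ∑ p ∈ Finset.range N, Multiset.replicate (g p) p with hMg
    have h0Mg : 0 ∉ Mg := by
      rw [hMg]
      intro h
      obtain ⟨i, hi, hmem⟩ := Multiset.mem_sum.mp h
      obtain ⟨hne, hieq⟩ := Multiset.mem_replicate.mp hmem
      subst hieq
      exact hne hg0
    have hvalMg : mval a Mg = ∑ p ∈ Finset.range N, g p * Ru a p := by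
      rw [hMg, mval_finsum]
      exact Finset.sum_congr rfl (fun p _ => mval_replicate a (g p) p)
    have hcardMg : Multiset.card Mg = ∑ p ∈ Finset.range N, g p := by
      rw [hMg, card_finsum]
      simp
    obtain ⟨M', h0M', hresM', hvalM', hcardM'⟩ := normalize a ha Mg.sum Mg le_rfl h0Mg
    set W0 := ∑ p ∈ Finset.range N, g p * Ru a p with hW0
    set N' := max (W0 + 1) (m - 1 + 1) with hN'
    have hmemM' : ∀ p ∈ M', p < N' := by
      intro p hp
      have h1 : Ru a p ≤ mval a M' := le_mval_of_mem a p M' hp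
      rw [hvalM', hvalMg] at h1
      have h2 : p ≤ Ru a p := self_le_Ru a (by omega) p
      omega
    have hcnt0M' : M'.count 0 = 0 := Multiset.count_eq_zero.mpr h0M'
    have hval1 : ∑ p ∈ Finset.range N', M'.count p * Ru a p = W0 := by
      rw [← mval_eq_sum a N' M' hmemM', hvalM', hvalMg]
    have hval2 : ∑ p ∈ Finset.range N', fof β p * Ru a p = W0 := by
      rw [fof_bridge β (Ru a) N' (le_max_right _ _)]
      omega
    have hfres := fof_resid ha β hβ
    have heqf := residF_eq a N' ha (fun p => M'.count p) (fof β)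
      hresM'.1 hresM'.2 hcnt0M' hfres.1 hfres.2 (fof_zero β) (by rw [hval1, hval2])
    have hcard1 : Multiset.card M' = ∑ p ∈ Finset.range N', M'.count p :=
      card_eq_sum N' M' hmemM'
    have hsum_eq : ∑ p ∈ Finset.range N', M'.count p = ∑ p ∈ Finset.range N', fof β p :=
      Finset.sum_congr rfl (fun p hp => heqf p (Finset.mem_range.mp hp))
    have hsum_fof : ∑ p ∈ Finset.range N', fof β p = ∑ i : Fin (m - 1), β i :=
      fof_bridge1 β N' (le_max_right _ _)
    omega
  -- ============ representation existence ============
  have hfresα := fof_resid ha α hα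
  have hvα_lt : (∑ i : Fin (m - 1), α i * Ru a ((i : ℕ) + 1)) + 1 ≤ Ru a (m - 1 + 1) := by
    have hb := residF_bound a ha (fof α) hfresα.1 hfresα.2 (fof_zero α) (m - 1 + 1) (by omega)
    rw [fof_bridge α (Ru a) (m - 1 + 1) le_rfl] at hb
    exact hb
  have hrep : ∀ V, V < P → ∃ β : Fin (m - 1) → ℕ, IsResidual a β ∧
      (∑ i : Fin (m - 1), β i * Ru a ((i : ℕ) + 1)) = V := by
    intro V hV
    obtain ⟨M', h0M', hres', hval', hcard'⟩ := normalize a ha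
      (Multiset.replicate V 1).sum (Multiset.replicate V 1) le_rfl
      (by intro h; have := Multiset.eq_of_mem_replicate h; omega)
    have hvalV : mval a M' = V := by
      rw [hval', mval_replicate, Ru_one, mul_one]
    have hmem' : ∀ p ∈ M', p < m - 1 + 1 := by
      intro p hp
      have h1 : Ru a p ≤ V := by rw [← hvalV]; exact le_mval_of_mem a p M' hp
      by_contra hge
      have h2 : Ru a (m - 1 + 1) ≤ Ru a p := (Ru_strictMono a (by omega)).monotone (by omega)
      omega
    refine ⟨fun i => M'.count ((i : ℕ) + 1), ⟨fun i => hres'.1 _, ?_⟩, ?_⟩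
    · intro i j hia hi1 hji
      exact hres'.2 ((i : ℕ) + 1) ((j : ℕ) + 1) hia (by omega)
        (by have : (j : ℕ) < (i : ℕ) := hji; omega)
    · have h1 : mval a M' = ∑ p ∈ Finset.range (m - 1 + 1), M'.count p * Ru a p :=
        mval_eq_sum a (m - 1 + 1) M' hmem'
      rw [hvalV, Finset.sum_range_succ' (fun p => M'.count p * Ru a p) (m - 1)] at h1
      rw [Ru_zero, Nat.mul_zero, add_zero] at h1
      rw [← Fin.sum_univ_eq_sum_range (fun k => M'.count (k + 1) * Ru a (k + 1)) (m - 1)] at h1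
      exact h1.symm
  -- ============ colex vs value ============
  have hlt_val : ∀ β γ : Fin (m - 1) → ℕ, IsResidual a β → ColexLt β γ →
      (∑ i : Fin (m - 1), β i * Ru a ((i : ℕ) + 1)) < ∑ i : Fin (m - 1), γ i * Ru a ((i : ℕ) + 1) := by
    intro β γ hβ hlt
    obtain ⟨t, htlt, hag⟩ := hlt
    have hfres := fof_resid ha β hβ
    have h := residF_lt a (m - 1 + 1) ha (fof β) (fof γ) hfres.1 hfres.2 (fof_zero β)
      ((t : ℕ) + 1) (by omega) (by have := t.isLt; omega)
      (by rw [fof_idx, fof_idx]; exact htlt)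
      (by
        intro q hq hqr
        have h1 : 1 ≤ q ∧ q ≤ m - 1 := ⟨by omega, by omega⟩
        set i : Fin (m - 1) := ⟨q - 1, by omega⟩ with hi
        have hq_eq : q = (i : ℕ) + 1 := by rw [hi]; simp; omega
        rw [hq_eq, fof_idx, fof_idx]
        exact hag i (by rw [Fin.lt_def]; simp [hi]; omega))
    rw [fof_bridge β (Ru a) (m - 1 + 1) le_rfl, fof_bridge γ (Ru a) (m - 1 + 1) le_rfl] at h
    exact h
  have hcolex_le_val : ∀ β γ : Fin (m - 1) → ℕ, IsResidual a β → ColexLe β γ →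
      (∑ i : Fin (m - 1), β i * Ru a ((i : ℕ) + 1)) ≤ ∑ i : Fin (m - 1), γ i * Ru a ((i : ℕ) + 1) := by
    intro β γ hβ hle
    rcases hle with h | h
    · rw [h]
    · exact le_of_lt (hlt_val β γ hβ h)
  have hval_le_colex : ∀ β γ : Fin (m - 1) → ℕ, IsResidual a β → IsResidual a γ →
      (∑ i : Fin (m - 1), β i * Ru a ((i : ℕ) + 1)) ≤ (∑ i : Fin (m - 1), γ i * Ru a ((i : ℕ) + 1)) →
      ColexLe β γ := by
    intro β γ hβ hγ hle
    by_cases heq : β = γ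
    · exact Or.inl heq
    right
    have hDne : (Finset.univ.filter (fun t : Fin (m - 1) => β t ≠ γ t)).Nonempty := by
      by_contra h
      rw [Finset.not_nonempty_iff_eq_empty, Finset.filter_eq_empty_iff] at h
      apply heq
      funext t
      have := h (Finset.mem_univ t)
      simpa using this
    set t := (Finset.univ.filter (fun t : Fin (m - 1) => β t ≠ γ t)).max' hDne with ht_def
    have htmem := (Finset.univ.filter (fun t : Fin (m - 1) => β t ≠ γ t)).max'_mem hDne
    have htne : β t ≠ γ t := (Finset.mem_filter.mp htmem).2
    have hagree : ∀ j, t < j → β j = γ j := by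
      intro j hj
      by_contra hjne
      have hjmem : j ∈ Finset.univ.filter (fun t : Fin (m - 1) => β t ≠ γ t) :=
        Finset.mem_filter.mpr ⟨Finset.mem_univ j, hjne⟩
      have := Finset.le_max' _ j hjmem
      exact absurd hj (not_lt.mpr this)
    rcases lt_trichotomy (β t) (γ t) with h | h | h
    · exact ⟨t, h, hagree⟩
    · exact absurd h htne
    · exfalso
      have hcl : ColexLt γ β := ⟨t, h, fun j hj => (hagree j hj).symm⟩
      have := hlt_val γ β hγ hcl
      omega
  -- ============ algebra ============
  have halg : ∀ L W : ℕ, L * s 0 + Q1 * W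
      = (L + (W / P) * Q2) * s 0 + Q1 * (W % P) := by
    intro L W
    have h := Nat.div_add_mod W P
    calc L * s 0 + Q1 * W = L * s 0 + Q1 * (P * (W / P) + W % P) := by rw [h]
      _ = L * s 0 + (Q1 * P) * (W / P) + Q1 * (W % P) := by ring
      _ = L * s 0 + (Q2 * s 0) * (W / P) + Q1 * (W % P) := by rw [hQ1P]
      _ = (L + (W / P) * Q2) * s 0 + Q1 * (W % P) := by ring
  have hbound : ∀ (L W N : ℕ) (g : ℕ → ℕ), g 0 = 0 →
      W = (∑ p ∈ Finset.range N, g p * Ru a p) → (∑ p ∈ Finset.range N, g p) ≤ L →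
      ∀ β : Fin (m - 1) → ℕ, IsResidual a β →
      (∑ i : Fin (m - 1), β i * Ru a ((i : ℕ) + 1)) = W % P →
      (∑ i : Fin (m - 1), β i) ≤ L + (W / P) * Q2 := by
    intro L W N g hg0 hW hgL β hβ hβval
    rcases Nat.eq_zero_or_pos (W / P) with hz | hz
    · have hWP : W % P = W := by
        have := Nat.div_add_mod W P
        rw [hz] at this
        omega
      have h := hmin N g hg0 β hβ (by rw [hβval, hWP, hW])
      omega
    · have h1 : (∑ i : Fin (m - 1), β i) ≤ ∑ i : Fin (m - 1), β i * Ru a ((i : ℕ) + 1) := by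
        apply Finset.sum_le_sum
        intro i _
        exact Nat.le_mul_of_pos_right _ (Ru_pos a _ (by omega))
      have h2 : W % P < P := Nat.mod_lt _ hPpos
      have h3 : 1 * Q2 ≤ (W / P) * Q2 := Nat.mul_le_mul_right _ hz
      rw [one_mul] at h3
      omega
  -- ============ final assembly ============
  ext x
  simp only [apery, Set.mem_setOf_eq]
  constructor
  · rintro ⟨hxS, hnot⟩
    obtain ⟨L, W, N, g, hx_eq, hg0, hW, hgL⟩ := hdecomp2 x hxS
    obtain ⟨β, hβres, hβval⟩ := hrep (W % P) (Nat.mod_lt _ hPpos)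
    refine ⟨β, hβres, ?_, ?_⟩
    · apply hval_le_colex β α hβres hα
      rw [hβval]
      have := Nat.mod_lt W hPpos
      omega
    · have hKσ : (∑ i : Fin (m - 1), β i) ≤ L + (W / P) * Q2 :=
        hbound L W N g hg0 hW hgL β hβres hβval
      obtain ⟨k, hk⟩ := Nat.exists_eq_add_of_le hKσ
      have hx2 : x = (L + (W / P) * Q2) * s 0 + Q1 * (W % P) := by
        rw [hx_eq]
        exact halg L W
      have hx3 : x = (∑ i : Fin (m - 1), β i * s ((i : ℕ) + 1)) + k * s 0 := by
        rw [hx2, hk, hwβ β, hβval]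
        ring
      rcases Nat.eq_zero_or_pos k with hk0 | hk0
      · rw [hk0] at hx3
        simpa using hx3
      · exfalso
        apply hnot
        refine ⟨(∑ i : Fin (m - 1), β i * s ((i : ℕ) + 1)) + (k - 1) * s 0, ?_, ?_⟩
        · apply AddSubmonoid.add_mem
          · exact hwS β
          · simpa using nsmul_mem (hSmem 0) (k - 1)
        · rw [hx3, show k = (k - 1) + 1 by omega]
          simp only [Nat.add_sub_cancel]
          ring
  · rintro ⟨β, hβres, hβle, rfl⟩
    refine ⟨hwS β, ?_⟩
    rintro ⟨t, htS, hteq⟩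
    obtain ⟨L, W, N, g, ht_eq, hg0, hW, hgL⟩ := hdecomp2 t htS
    have hvβP : (∑ i : Fin (m - 1), β i * Ru a ((i : ℕ) + 1)) < P := by
      have h1 := hcolex_le_val β α hβres hβle
      omega
    have heq1 : (∑ i : Fin (m - 1), β i) * s 0 + Q1 * (∑ i : Fin (m - 1), β i * Ru a ((i : ℕ) + 1))
        = (1 + L) * s 0 + Q1 * W := by
      rw [← hwβ β, hteq, ht_eq]
      ring
    have hmod : (Q1 * (∑ i : Fin (m - 1), β i * Ru a ((i : ℕ) + 1))) % s 0 = (Q1 * W) % s 0 := by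
      have h2 := congrArg (· % s 0) heq1
      have e1 : ∀ (A B : ℕ), (A * s 0 + B) % s 0 = B % s 0 := by
        intro A B
        rw [mul_comm, Nat.mul_add_mod]
      rw [e1, e1] at h2
      exact h2
    have hmodP := hcancel _ _ hmod
    have hvβW : (∑ i : Fin (m - 1), β i * Ru a ((i : ℕ) + 1)) = W % P := by
      rw [← Nat.mod_eq_of_lt hvβP, hmodP]
    have hb := hbound L W N g hg0 hW hgL β hβres hvβW
    have heq2 : (∑ i : Fin (m - 1), β i) * s 0 + Q1 * (∑ i : Fin (m - 1), β i * Ru a ((i : ℕ) + 1))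
        = (1 + L + (W / P) * Q2) * s 0 + Q1 * (∑ i : Fin (m - 1), β i * Ru a ((i : ℕ) + 1)) := by
      rw [heq1, halg (1 + L) W, ← hvβW]
    have hσ : (∑ i : Fin (m - 1), β i) = 1 + L + (W / P) * Q2 := by
      have h3 : (∑ i : Fin (m - 1), β i) * s 0 = (1 + L + (W / P) * Q2) * s 0 := by omega
      exact Nat.eq_of_mul_eq_mul_right hs0pos h3
    omega
end

section
/- Let m = e(S_n) with m ≥ 2, let e = gcd of the elements of S_n, and let (α_1, …, α_{m−1}) be the unique residual (m−1)-tuple such that s_0/e = 1 + ∑_{j=1}^{m−1} α_j·R_j. Then max Ap(S_n, s_0) = ∑_{j=1}^{m−1} α_j·s_j, and the Frobenius number of the numerical semigroup (1/e)·S_n satisfies F((1/e)·S_n) = ∑_{j=1}^{m−1} α_j·(s_j/e) − s_0/e. -/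
/-! ### Auxiliary machinery -/

/-- Digit functions that are "residual". -/
def ResD (a : ℕ) (h : ℕ → ℕ) : Prop :=
  h 0 = 0 ∧ (∀ j, h j ≤ a) ∧ ∀ j, 2 ≤ j → h j = a → ∀ i < j, h i = 0

lemma sum_ext {h : ℕ → ℕ} {N N' : ℕ} (hsupp : ∀ j, N ≤ j → h j = 0) (hNN' : N ≤ N')
    (f : ℕ → ℕ) :
    ∑ j ∈ Finset.range N', h j * f j = ∑ j ∈ Finset.range N, h j * f j := by
  refine (Finset.sum_subset (Finset.range_subset_range.mpr hNN') ?_).symm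
  intro x _ hx
  rw [hsupp x (by simpa using hx)]
  simp

lemma sum_ext0 {h : ℕ → ℕ} {N N' : ℕ} (hsupp : ∀ j, N ≤ j → h j = 0) (hNN' : N ≤ N') :
    ∑ j ∈ Finset.range N', h j = ∑ j ∈ Finset.range N, h j := by
  refine (Finset.sum_subset (Finset.range_subset_range.mpr hNN') ?_).symm
  intro x _ hx
  exact hsupp x (by simpa using hx)

lemma map_sum_eq_count' (M : Multiset ℕ) (f : ℕ → ℕ) (N : ℕ) (hN : ∀ j ∈ M, j < N) :
    (M.map f).sum = ∑ j ∈ Finset.range N, M.count j * f j := by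
  induction M using Multiset.induction with
  | empty => simp
  | cons x M ih =>
      have hx : x < N := hN x (Multiset.mem_cons_self x M)
      have hM : ∀ j ∈ M, j < N := fun j hj => hN j (Multiset.mem_cons_of_mem hj)
      rw [Multiset.map_cons, Multiset.sum_cons, ih hM]
      have hsplit : ∑ j ∈ Finset.range N, (x ::ₘ M).count j * f j
          = (∑ j ∈ Finset.range N, M.count j * f j)
            + ∑ j ∈ Finset.range N, (if j = x then 1 else 0) * f j := by
        rw [← Finset.sum_add_distrib]
        apply Finset.sum_congr rfl
        intro j _
        rw [Multiset.count_cons]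
        ring
      have hone : ∑ j ∈ Finset.range N, (if j = x then 1 else 0) * f j = f x := by
        have : ∀ j, (if j = x then 1 else 0) * f j = if j = x then f j else 0 := by
          intro j; split <;> ring
        simp_rw [this]
        rw [Finset.sum_ite_eq' (Finset.range N) x f]
        simp [hx]
      rw [hsplit, hone]
      ring

lemma digits_multiset (h : ℕ → ℕ) : ∀ N : ℕ, ∃ D : Multiset ℕ,
    (∀ f : ℕ → ℕ, (D.map f).sum = ∑ j ∈ Finset.range N, h j * f j) ∧
    Multiset.card D = ∑ j ∈ Finset.range N, h j ∧ ∀ x ∈ D, h x ≠ 0 ∧ x < N := by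
  intro N
  induction N with
  | zero => exact ⟨0, by simp, by simp, by simp⟩
  | succ N ih =>
      obtain ⟨D, hf, hc, hm⟩ := ih
      refine ⟨D + Multiset.replicate (h N) N, ?_, ?_, ?_⟩
      · intro f
        rw [Multiset.map_add, Multiset.sum_add, Multiset.map_replicate, Multiset.sum_replicate,
          smul_eq_mul, hf f, Finset.sum_range_succ]
      · rw [Multiset.card_add, Multiset.card_replicate, hc, Finset.sum_range_succ]
      · intro x hx
        rcases Multiset.mem_add.mp hx with hx' | hx'
        · exact ⟨(hm x hx').1, by have := (hm x hx').2; omega⟩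
        · obtain ⟨hne, rfl⟩ := Multiset.mem_replicate.mp hx'
          exact ⟨hne, by omega⟩

lemma exists_mul_modEq (q : ℕ) (hq : 0 < q) (u : ℕ) (h : Nat.Coprime u q) (x : ℕ) :
    ∃ K, K < q ∧ u * K ≡ x [MOD q] := by
  haveI : NeZero q := ⟨by omega⟩
  refine ⟨((ZMod.unitOfCoprime u h)⁻¹ * (x : ZMod q) : ZMod q).val, ZMod.val_lt _, ?_⟩
  have : ((u * ((ZMod.unitOfCoprime u h)⁻¹ * (x : ZMod q) : ZMod q).val : ℕ) : ZMod q) = x := by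
    push_cast
    rw [ZMod.natCast_val, ZMod.cast_id, ← ZMod.coe_unitOfCoprime u h, ← mul_assoc,
      ← Units.val_mul, mul_inv_cancel, Units.val_one, one_mul]
  exact (ZMod.natCast_eq_natCast_iff _ _ _).mp this

lemma mem_closure_rep {s : ℕ → ℕ} {x : ℕ} (h : x ∈ AddSubmonoid.closure (Set.range s)) :
    ∃ M : Multiset ℕ, x = (M.map s).sum := by
  induction h using AddSubmonoid.closure_induction with
  | mem y hy => obtain ⟨j, rfl⟩ := hy; exact ⟨{j}, by simp⟩
  | zero => exact ⟨0, by simp⟩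
  | add x y hx hy ihx ihy =>
      obtain ⟨M1, rfl⟩ := ihx; obtain ⟨M2, rfl⟩ := ihy
      exact ⟨M1 + M2, by simp⟩

lemma rep_mem_closure (s : ℕ → ℕ) (M : Multiset ℕ) :
    (M.map s).sum ∈ AddSubmonoid.closure (Set.range s) := by
  induction M using Multiset.induction with
  | empty =>
      rw [Multiset.map_zero, Multiset.sum_zero]
      exact zero_mem _
  | cons j M ih =>
      rw [Multiset.map_cons, Multiset.sum_cons]
      exact add_mem (AddSubmonoid.subset_closure ⟨j, rfl⟩) ih

lemma rep_decomp (R : ℕ → ℕ) (a s0 A : ℕ) (s : ℕ → ℕ)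
    (hsj : ∀ j, s j = s0 * a ^ j + A * R j) (M : Multiset ℕ) :
    (M.map s).sum = s0 * (M.map (a ^ ·)).sum + A * (M.map R).sum := by
  induction M using Multiset.induction with
  | empty => simp
  | cons j M ih =>
      rw [Multiset.map_cons, Multiset.sum_cons, Multiset.map_cons, Multiset.sum_cons,
        Multiset.map_cons, Multiset.sum_cons, ih, hsj j]
      ring

lemma pow_decomp (R : ℕ → ℕ) (a : ℕ) (hpow : ∀ j, a ^ j = (a - 1) * R j + 1) (M : Multiset ℕ) :
    (M.map (a ^ ·)).sum = (a - 1) * (M.map R).sum + Multiset.card M := by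
  induction M using Multiset.induction with
  | empty => simp
  | cons j M ih =>
      rw [Multiset.map_cons, Multiset.sum_cons, Multiset.map_cons, Multiset.sum_cons,
        Multiset.card_cons, ih, hpow j]
      ring
section MoreAux
variable {a : ℕ} (R : ℕ → ℕ) (ha : 2 ≤ a) (hR0 : R 0 = 0) (hRrec : ∀ j, R (j + 1) = a * R j + 1)

include ha hR0 hRrec in
/-- Bound: a residual digit function supported in `[1, N]` has value at most `a * R N`. -/
lemma resD_val_le : ∀ (N : ℕ) (h : ℕ → ℕ), ResD a h → (∀ j, N + 1 ≤ j → h j = 0) →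
    ∑ j ∈ Finset.range (N + 1), h j * R j ≤ a * R N := by
  intro N
  induction N with
  | zero =>
      intro h hres _
      simp [hres.1]
  | succ N ih =>
      intro h hres hsupp
      rw [Finset.sum_range_succ]
      rcases Nat.eq_zero_or_pos N with rfl | hN
      · -- N + 1 = 1
        have h0 : h 0 = 0 := hres.1
        have h1 : R 1 = 1 := by rw [show (1:ℕ) = 0 + 1 from rfl, hRrec, hR0]; ring
        simp [Finset.sum_range_one, h0, h1]
        exact hres.2.1 1
      · by_cases hta : h (N + 1) = a
        · -- all lower digits are zero
          have hlow : ∀ j < N + 1, h j = 0 := by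
            intro j hj
            rcases Nat.eq_zero_or_pos j with rfl | hj1
            · exact hres.1
            · exact hres.2.2 (N + 1) (by omega) hta j hj
          have : ∑ j ∈ Finset.range (N + 1), h j * R j = 0 := by
            apply Finset.sum_eq_zero
            intro j hj
            rw [hlow j (by simpa using hj)]
            ring
          rw [this, hta]
          have : R (N + 1) ≤ R (N + 1 + 1) := by
            rw [hRrec (N + 1)]
            nlinarith [Nat.zero_le (R (N + 1))]
          omega
        · -- top digit ≤ a - 1
          have htle : h (N + 1) ≤ a - 1 := by
            have := hres.2.1 (N + 1); omega
          set h' : ℕ → ℕ := Function.update h (N + 1) 0 with hh'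
          have hres' : ResD a h' := by
            refine ⟨?_, ?_, ?_⟩
            · rw [hh', Function.update_apply]; simp [hres.1]
            · intro j; rw [hh', Function.update_apply]
              split
              · exact Nat.zero_le a
              · exact hres.2.1 j
            · intro j hj hja i hi
              rw [hh', Function.update_apply] at hja ⊢
              split
              · rfl
              · split at hja
                · omega
                · exact hres.2.2 j hj hja i hi
          have hsupp' : ∀ j, N + 1 ≤ j → h' j = 0 := by
            intro j hj
            rw [hh', Function.update_apply]
            split
            · rfl
            · exact hsupp j (by omega)
          have hle := ih h' hres' hsupp'
          have hagree : ∑ j ∈ Finset.range (N + 1), h j * R j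
              = ∑ j ∈ Finset.range (N + 1), h' j * R j := by
            apply Finset.sum_congr rfl
            intro j hj
            rw [hh', Function.update_apply]
            have : j ≠ N + 1 := by simp at hj; omega
            simp [this]
          have hrec : R (N + 1) = a * R N + 1 := hRrec N
          have hmul : h (N + 1) * R (N + 1) ≤ (a - 1) * R (N + 1) :=
            Nat.mul_le_mul_right _ htle
          have hsub : (a - 1) * R (N + 1) + R (N + 1) = a * R (N + 1) := by
            have h1 : a - 1 + 1 = a := by omega
            calc (a - 1) * R (N + 1) + R (N + 1) = (a - 1 + 1) * R (N + 1) := by ring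
            _ = a * R (N + 1) := by rw [h1]
          omega

include ha hR0 hRrec in
/-- Uniqueness of residual representations. -/
lemma resD_unique : ∀ (N : ℕ) (h h' : ℕ → ℕ), ResD a h → ResD a h' →
    (∀ j, N ≤ j → h j = 0) → (∀ j, N ≤ j → h' j = 0) →
    (∑ j ∈ Finset.range N, h j * R j = ∑ j ∈ Finset.range N, h' j * R j) →
    ∀ j, h j = h' j := by
  intro N
  induction N with
  | zero =>
      intro h h' _ _ hs hs' _ j
      rw [hs j (Nat.zero_le j), hs' j (Nat.zero_le j)]
  | succ N ih =>
      intro h h' hres hres' hs hs' hsum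
      rcases Nat.eq_zero_or_pos N with rfl | hN
      · -- N+1 = 1 : only position 0, which is 0 for both
        intro j
        rcases Nat.eq_zero_or_pos j with rfl | hj
        · rw [hres.1, hres'.1]
        · rw [hs j hj, hs' j hj]
      · -- key: top digits agree
        have hlowbound : ∀ (g : ℕ → ℕ), ResD a g → (∀ j, N + 1 ≤ j → g j = 0) →
            ∑ j ∈ Finset.range N, g j * R j ≤ a * R (N - 1) := by
          intro g hg hgs
          set g' : ℕ → ℕ := Function.update g N 0 with hg'
          have hresg' : ResD a g' := by
            refine ⟨?_, ?_, ?_⟩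
            · rw [hg', Function.update_apply]; split <;> simp [hg.1]
            · intro j; rw [hg', Function.update_apply]
              split
              · exact Nat.zero_le a
              · exact hg.2.1 j
            · intro j hj hja i hi
              rw [hg', Function.update_apply] at hja ⊢
              split
              · rfl
              · split at hja
                · omega
                · exact hg.2.2 j hj hja i hi
          have hsg' : ∀ j, (N - 1) + 1 ≤ j → g' j = 0 := by
            intro j hj
            rw [hg', Function.update_apply]
            split
            · rfl
            · exact hgs j (by omega)
          have := resD_val_le R ha hR0 hRrec (N - 1) g' hresg' hsg'
          have heq : ∑ j ∈ Finset.range ((N - 1) + 1), g' j * R j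
              = ∑ j ∈ Finset.range N, g j * R j := by
            have hNN : (N - 1) + 1 = N := by omega
            rw [hNN]
            apply Finset.sum_congr rfl
            intro j hj
            rw [hg', Function.update_apply]
            have : j ≠ N := by simp at hj; omega
            simp [this]
          omega
        have hRN : R N = a * R (N - 1) + 1 := by
          have := hRrec (N - 1)
          have hNN : (N - 1) + 1 = N := by omega
          rwa [hNN] at this
        rw [Finset.sum_range_succ, Finset.sum_range_succ] at hsum
        have hlow := hlowbound h hres (fun j hj => hs j (by omega))
        have hlow' := hlowbound h' hres' (fun j hj => hs' j (by omega))
        have htop : h N = h' N := by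
          by_contra hne
          rcases Nat.lt_or_ge (h N) (h' N) with hlt | hge
          · have : (h N + 1) * R N ≤ h' N * R N := Nat.mul_le_mul_right _ (by omega)
            have hexp : (h N + 1) * R N = h N * R N + R N := by ring
            omega
          · have hlt : h' N < h N := by omega
            have : (h' N + 1) * R N ≤ h N * R N := Nat.mul_le_mul_right _ (by omega)
            have hexp : (h' N + 1) * R N = h' N * R N + R N := by ring
            omega
        have hsum' : ∑ j ∈ Finset.range N, h j * R j = ∑ j ∈ Finset.range N, h' j * R j := by
          rw [htop] at hsum
          omega
        -- truncate and recurse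
        set g : ℕ → ℕ := Function.update h N 0 with hgdef
        set g' : ℕ → ℕ := Function.update h' N 0 with hgdef'
        have hresg : ResD a g := by
          refine ⟨?_, ?_, ?_⟩
          · rw [hgdef, Function.update_apply]; split <;> simp [hres.1]
          · intro j; rw [hgdef, Function.update_apply]
            split
            · exact Nat.zero_le a
            · exact hres.2.1 j
          · intro j hj hja i hi
            rw [hgdef, Function.update_apply] at hja ⊢
            split
            · rfl
            · split at hja
              · omega
              · exact hres.2.2 j hj hja i hi
        have hresg' : ResD a g' := by
          refine ⟨?_, ?_, ?_⟩
          · rw [hgdef', Function.update_apply]; split <;> simp [hres'.1]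
          · intro j; rw [hgdef', Function.update_apply]
            split
            · exact Nat.zero_le a
            · exact hres'.2.1 j
          · intro j hj hja i hi
            rw [hgdef', Function.update_apply] at hja ⊢
            split
            · rfl
            · split at hja
              · omega
              · exact hres'.2.2 j hj hja i hi
        have hsg : ∀ j, N ≤ j → g j = 0 := by
          intro j hj
          rw [hgdef, Function.update_apply]
          split
          · rfl
          · exact hs j (by omega)
        have hsg' : ∀ j, N ≤ j → g' j = 0 := by
          intro j hj
          rw [hgdef', Function.update_apply]
          split
          · rfl
          · exact hs' j (by omega)
        have hsumg : ∑ j ∈ Finset.range N, g j * R j = ∑ j ∈ Finset.range N, g' j * R j := by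
          have e1 : ∑ j ∈ Finset.range N, g j * R j = ∑ j ∈ Finset.range N, h j * R j := by
            apply Finset.sum_congr rfl
            intro j hj
            rw [hgdef, Function.update_apply]
            have : j ≠ N := by simp at hj; omega
            simp [this]
          have e2 : ∑ j ∈ Finset.range N, g' j * R j = ∑ j ∈ Finset.range N, h' j * R j := by
            apply Finset.sum_congr rfl
            intro j hj
            rw [hgdef', Function.update_apply]
            have : j ≠ N := by simp at hj; omega
            simp [this]
          rw [e1, e2, hsum']
        have hrec := ih g g' hresg hresg' hsg hsg' hsumg
        intro j
        rcases eq_or_ne j N with rfl | hjN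
        · exact htop
        · have := hrec j
          rw [hgdef, hgdef', Function.update_apply, Function.update_apply] at this
          simpa [hjN] using this

include ha hR0 hRrec in
lemma exists_resD_of_rep : ∀ (B : ℕ) (M : Multiset ℕ), M.sum ≤ B → (∀ j ∈ M, 1 ≤ j) →
    ∃ (h : ℕ → ℕ) (N : ℕ), ResD a h ∧ (∀ j, N ≤ j → h j = 0) ∧
      (∑ j ∈ Finset.range N, h j * R j) = (M.map R).sum ∧
      (∑ j ∈ Finset.range N, h j) ≤ Multiset.card M := by
  have hR1 : R 1 = 1 := by rw [show (1:ℕ) = 0 + 1 from rfl, hRrec, hR0]; ring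
  intro B
  induction B with
  | zero =>
      intro M hsum hpos
      have hM0 : M = 0 := by
        by_contra hne
        obtain ⟨x, hx⟩ := Multiset.exists_mem_of_ne_zero hne
        have h1 : 1 ≤ x := hpos x hx
        have h2 : x ≤ M.sum := Multiset.single_le_sum (fun y _ => Nat.zero_le y) x hx
        omega
      subst hM0
      refine ⟨fun _ => 0, 0, ⟨rfl, fun _ => Nat.zero_le a, ?_⟩, fun _ _ => rfl, by simp, by simp⟩
      intro j hj hja i hi
      simp only at hja
      omega
  | succ B ih =>
      intro M hsum hpos
      by_cases hcase1 : ∃ j ∈ M, a + 1 ≤ M.count j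
      · obtain ⟨j, hjM, hcnt⟩ := hcase1
        have hj1 : 1 ≤ j := hpos j hjM
        have hrep : Multiset.replicate (a + 1) j ≤ M :=
          Multiset.le_count_iff_replicate_le.mp hcnt
        obtain ⟨rest, hrest⟩ := Multiset.le_iff_exists_add.mp hrep
        have hrestmem : ∀ x ∈ rest, x ∈ M := by
          intro x hx; rw [hrest]; exact Multiset.mem_add.mpr (Or.inr hx)
        have hMsum : M.sum = (a + 1) * j + rest.sum := by
          rw [hrest, Multiset.sum_add, Multiset.sum_replicate, smul_eq_mul]
        have hMval : (M.map R).sum = (a + 1) * R j + (rest.map R).sum := by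
          rw [hrest, Multiset.map_add, Multiset.sum_add, Multiset.map_replicate,
            Multiset.sum_replicate, smul_eq_mul]
        have hMcard : Multiset.card M = (a + 1) + Multiset.card rest := by
          rw [hrest, Multiset.card_add, Multiset.card_replicate]
        rcases eq_or_lt_of_le hj1 with hj1' | hj2
        · -- j = 1
          subst hj1'
          set M' : Multiset ℕ := 2 ::ₘ rest with hM'
          have hpos' : ∀ x ∈ M', 1 ≤ x := by
            intro x hx
            rcases Multiset.mem_cons.mp hx with rfl | hx'
            · omega
            · exact hpos x (hrestmem x hx')
          have hsum' : M'.sum ≤ B := by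
            have h2 : M'.sum = 2 + rest.sum := by
              rw [hM', Multiset.sum_cons]
            omega
          have hval : (M'.map R).sum = (M.map R).sum := by
            have h2 : (M'.map R).sum = R 2 + (rest.map R).sum := by
              rw [hM', Multiset.map_cons, Multiset.sum_cons]
            have h3 : R 2 = a * R 1 + 1 := hRrec 1
            rw [h2, h3, hMval, hR1]
            ring
          have hcard : Multiset.card M' ≤ Multiset.card M := by
            have h2 : Multiset.card M' = 1 + Multiset.card rest := by
              rw [hM', Multiset.card_cons]; omega
            omega
          obtain ⟨h, N, hres, hsupp, hv, hc⟩ := ih M' hsum' hpos'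
          exact ⟨h, N, hres, hsupp, by rw [hv, hval], hc.trans hcard⟩
        · -- 2 ≤ j
          obtain ⟨j', rfl⟩ : ∃ j', j = j' + 1 := ⟨j - 1, by omega⟩
          have hj'1 : 1 ≤ j' := by omega
          set M' : Multiset ℕ := (j' + 2) ::ₘ (Multiset.replicate a j' + rest) with hM'
          have hpos' : ∀ x ∈ M', 1 ≤ x := by
            intro x hx
            rcases Multiset.mem_cons.mp hx with rfl | hx'
            · omega
            · rcases Multiset.mem_add.mp hx' with hx'' | hx''
              · have := Multiset.eq_of_mem_replicate hx''; omega
              · exact hpos x (hrestmem x hx'')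
          have hM'sum : M'.sum = (j' + 2) + (a * j' + rest.sum) := by
            rw [hM', Multiset.sum_cons, Multiset.sum_add, Multiset.sum_replicate, smul_eq_mul]
          have hsum' : M'.sum ≤ B := by
            have h3 : (a + 1) * (j' + 1) = a * j' + a + j' + 1 := by ring
            omega
          have hval : (M'.map R).sum = (M.map R).sum := by
            have h2 : (M'.map R).sum = R (j' + 2) + (a * R j' + (rest.map R).sum) := by
              rw [hM', Multiset.map_cons, Multiset.sum_cons, Multiset.map_add,
                Multiset.sum_add, Multiset.map_replicate, Multiset.sum_replicate, smul_eq_mul]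
            have h3 : R (j' + 2) = a * R (j' + 1) + 1 := hRrec (j' + 1)
            have h4 : R (j' + 1) = a * R j' + 1 := hRrec j'
            rw [h2, h3, h4, hMval, h4]
            ring
          have hcard : Multiset.card M' ≤ Multiset.card M := by
            have h2 : Multiset.card M' = 1 + (a + Multiset.card rest) := by
              rw [hM', Multiset.card_cons, Multiset.card_add, Multiset.card_replicate]; omega
            omega
          obtain ⟨h, N, hres, hsupp, hv, hc⟩ := ih M' hsum' hpos'
          exact ⟨h, N, hres, hsupp, by rw [hv, hval], hc.trans hcard⟩
      · by_cases hcase2 : ∃ j ∈ M, 2 ≤ j ∧ a ≤ M.count j ∧ ∃ i ∈ M, i < j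
        · obtain ⟨j, hjM, hj2, hcnt, i, hiM, hij⟩ := hcase2
          have hi1 : 1 ≤ i := hpos i hiM
          obtain ⟨j', rfl⟩ : ∃ j', j = j' + 1 := ⟨j - 1, by omega⟩
          have hj'1 : 1 ≤ j' := by omega
          have hcposi : 0 < Multiset.count i M := Multiset.count_pos.mpr hiM
          have hsubM : Multiset.replicate a (j' + 1) + {i} ≤ M := by
            rw [Multiset.le_iff_count]
            intro x
            by_cases hxj : x = j' + 1
            · subst hxj
              rw [Multiset.count_add, Multiset.count_replicate, Multiset.count_singleton,
                if_pos rfl, if_neg (by omega)]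
              omega
            · by_cases hxi : x = i
              · subst hxi
                rw [Multiset.count_add, Multiset.count_replicate, Multiset.count_singleton,
                  if_neg (by omega), if_pos rfl]
                omega
              · rw [Multiset.count_add, Multiset.count_replicate, Multiset.count_singleton,
                  if_neg (by omega), if_neg (by omega)]
                omega
          obtain ⟨rest, hrest⟩ := Multiset.le_iff_exists_add.mp hsubM
          have hrestmem : ∀ x ∈ rest, x ∈ M := by
            intro x hx; rw [hrest]; exact Multiset.mem_add.mpr (Or.inr hx)
          have hMsum : M.sum = a * (j' + 1) + i + rest.sum := by
            rw [hrest, Multiset.sum_add, Multiset.sum_add, Multiset.sum_replicate,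
              Multiset.sum_singleton, smul_eq_mul]
          have hMval : (M.map R).sum = a * R (j' + 1) + R i + (rest.map R).sum := by
            rw [hrest, Multiset.map_add, Multiset.map_add, Multiset.sum_add, Multiset.sum_add,
              Multiset.map_replicate, Multiset.sum_replicate, Multiset.map_singleton,
              Multiset.sum_singleton, smul_eq_mul]
          have hMcard : Multiset.card M = a + 1 + Multiset.card rest := by
            rw [hrest, Multiset.card_add, Multiset.card_add, Multiset.card_replicate,
              Multiset.card_singleton]
          have hErec : R (j' + 2) = a * R (j' + 1) + 1 := hRrec (j' + 1)
          rcases eq_or_lt_of_le hi1 with hi1' | hi2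
          · -- i = 1
            set M' : Multiset ℕ := (j' + 2) ::ₘ rest with hM'
            have hpos' : ∀ x ∈ M', 1 ≤ x := by
              intro x hx
              rcases Multiset.mem_cons.mp hx with rfl | hx'
              · omega
              · exact hpos x (hrestmem x hx')
            have hM'sum : M'.sum = (j' + 2) + rest.sum := by
              rw [hM', Multiset.sum_cons]
            have hsum' : M'.sum ≤ B := by
              have hZ : 2 * (j' + 1) ≤ a * (j' + 1) := Nat.mul_le_mul_right _ ha
              omega
            have hval : (M'.map R).sum = (M.map R).sum := by
              have h2 : (M'.map R).sum = R (j' + 2) + (rest.map R).sum := by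
                rw [hM', Multiset.map_cons, Multiset.sum_cons]
              rw [h2, hErec, hMval, ← hi1', hR1]
            have hcard : Multiset.card M' ≤ Multiset.card M := by
              have h2 : Multiset.card M' = 1 + Multiset.card rest := by
                rw [hM', Multiset.card_cons]; omega
              omega
            obtain ⟨h, N, hres, hsupp, hv, hc⟩ := ih M' hsum' hpos'
            exact ⟨h, N, hres, hsupp, by rw [hv, hval], hc.trans hcard⟩
          · -- 2 ≤ i
            obtain ⟨i', rfl⟩ : ∃ i', i = i' + 1 := ⟨i - 1, by omega⟩
            have hi'1 : 1 ≤ i' := by omega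
            set M' : Multiset ℕ := (j' + 2) ::ₘ (Multiset.replicate a i' + rest) with hM'
            have hpos' : ∀ x ∈ M', 1 ≤ x := by
              intro x hx
              rcases Multiset.mem_cons.mp hx with rfl | hx'
              · omega
              · rcases Multiset.mem_add.mp hx' with hx'' | hx''
                · have := Multiset.eq_of_mem_replicate hx''; omega
                · exact hpos x (hrestmem x hx'')
            have hM'sum : M'.sum = (j' + 2) + (a * i' + rest.sum) := by
              rw [hM', Multiset.sum_cons, Multiset.sum_add, Multiset.sum_replicate, smul_eq_mul]
            have hsum' : M'.sum ≤ B := by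
              have hW : a * i' + a * (j' - i') = a * j' := by
                rw [← Nat.mul_add]
                congr 1
                omega
              have hW2 : 2 * (j' - i') ≤ a * (j' - i') := Nat.mul_le_mul_right _ ha
              have hE : a * (j' + 1) = a * j' + a := by ring
              omega
            have hval : (M'.map R).sum = (M.map R).sum := by
              have h2 : (M'.map R).sum = R (j' + 2) + (a * R i' + (rest.map R).sum) := by
                rw [hM', Multiset.map_cons, Multiset.sum_cons, Multiset.map_add,
                  Multiset.sum_add, Multiset.map_replicate, Multiset.sum_replicate, smul_eq_mul]
              have h4 : R (i' + 1) = a * R i' + 1 := hRrec i'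
              rw [h2, hErec, hMval, h4]
              ring
            have hcard : Multiset.card M' ≤ Multiset.card M := by
              have h2 : Multiset.card M' = 1 + (a + Multiset.card rest) := by
                rw [hM', Multiset.card_cons, Multiset.card_add, Multiset.card_replicate]; omega
              omega
            obtain ⟨h, N, hres, hsupp, hv, hc⟩ := ih M' hsum' hpos'
            exact ⟨h, N, hres, hsupp, by rw [hv, hval], hc.trans hcard⟩
        · -- residual shaped
          push_neg at hcase1 hcase2
          refine ⟨fun j => M.count j, M.sum + 1, ⟨?_, ?_, ?_⟩, ?_, ?_, ?_⟩
          · refine Multiset.count_eq_zero.mpr ?_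
            intro h0
            exact absurd (hpos 0 h0) (by omega)
          · intro j
            show M.count j ≤ a
            by_cases hj : j ∈ M
            · have := hcase1 j hj; omega
            · rw [Multiset.count_eq_zero.mpr hj]; exact Nat.zero_le a
          · intro j hj2p hja i hi
            have hja' : M.count j = a := hja
            have hjM : j ∈ M := Multiset.count_pos.mp (by omega)
            show M.count i = 0
            refine Multiset.count_eq_zero.mpr ?_
            intro hiMm
            have := hcase2 j hjM hj2p (by omega) i hiMm
            omega
          · intro j hj
            show M.count j = 0
            refine Multiset.count_eq_zero.mpr ?_
            intro hjM
            have := Multiset.single_le_sum (fun y _ => Nat.zero_le y) j hjM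
            omega
          · exact (map_sum_eq_count' M R (M.sum + 1) (fun j hj =>
              by have := Multiset.single_le_sum (fun y _ => Nat.zero_le y) j hj; omega)).symm
          · have h1 := map_sum_eq_count' M (fun _ => 1) (M.sum + 1) (fun j hj =>
              by have := Multiset.single_le_sum (fun y _ => Nat.zero_le y) j hj; omega)
            have h2 : ((M.map (fun _ => 1)).sum : ℕ) = Multiset.card M := by
              rw [Multiset.map_const', Multiset.sum_replicate, smul_eq_mul, mul_one]
            simp only [mul_one] at h1
            rw [← h2, h1]

include ha hR0 hRrec in
lemma exists_decrement : ∀ (t : ℕ) (M0 : Multiset ℕ), (∀ j ∈ M0, 1 ≤ j) →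
    t ≤ (M0.map R).sum →
    ∃ M : Multiset ℕ, (∀ j ∈ M, 1 ≤ j) ∧ (M.map R).sum + t = (M0.map R).sum ∧
      Multiset.card M ≤ Multiset.card M0 + (a - 1) * t := by
  have hR1 : R 1 = 1 := by rw [show (1:ℕ) = 0 + 1 from rfl, hRrec, hR0]; ring
  intro t
  induction t with
  | zero =>
      intro M0 h _
      exact ⟨M0, h, by ring, by omega⟩
  | succ t iht =>
      intro M0 hpos ht
      obtain ⟨M, hMpos, hval, hcard⟩ := iht M0 hpos (by omega)
      have hvpos : 0 < (M.map R).sum := by omega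
      have hMne : M ≠ 0 := by rintro rfl; simp at hvpos
      obtain ⟨j, hj⟩ := Multiset.exists_mem_of_ne_zero hMne
      obtain ⟨M1, rfl⟩ := Multiset.exists_cons_of_mem hj
      have hj1 : 1 ≤ j := hMpos j hj
      have hM1pos : ∀ x ∈ M1, 1 ≤ x := fun x hx => hMpos x (Multiset.mem_cons_of_mem hx)
      have hsplit : ((j ::ₘ M1).map R).sum = R j + (M1.map R).sum := by
        rw [Multiset.map_cons, Multiset.sum_cons]
      have hcardc : Multiset.card (j ::ₘ M1) = Multiset.card M1 + 1 := by
        rw [Multiset.card_cons]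
      have hdist : (a - 1) * (t + 1) = (a - 1) * t + (a - 1) := by ring
      rcases eq_or_lt_of_le hj1 with rfl | hj2
      · -- j = 1
        refine ⟨M1, hM1pos, ?_, ?_⟩
        · rw [hR1] at hsplit; omega
        · omega
      · obtain ⟨j', rfl⟩ : ∃ j', j = j' + 1 := ⟨j - 1, by omega⟩
        have hj'1 : 1 ≤ j' := by omega
        refine ⟨Multiset.replicate a j' + M1, ?_, ?_, ?_⟩
        · intro x hx
          rcases Multiset.mem_add.mp hx with hx' | hx'
          · have := Multiset.eq_of_mem_replicate hx'; omega
          · exact hM1pos x hx'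
        · have h1 : ((Multiset.replicate a j' + M1).map R).sum = a * R j' + (M1.map R).sum := by
            rw [Multiset.map_add, Multiset.sum_add, Multiset.map_replicate,
              Multiset.sum_replicate, smul_eq_mul]
          have h2 : R (j' + 1) = a * R j' + 1 := hRrec j'
          rw [h1]
          rw [h2] at hsplit
          omega
        · have h1 : Multiset.card (Multiset.replicate a j' + M1)
              = a + Multiset.card M1 := by
            rw [Multiset.card_add, Multiset.card_replicate]
          omega

end MoreAux

/-- let `m = e(S_n)` with `m ≥ 2`, let `e` be the gcd of the
elements of `S_n`, and let `(α_1, …, α_{m−1})` be the residual `(m−1)`-tuple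
with `s_0/e = 1 + ∑_{j=1}^{m−1} α_j·R_j`. Then
`max Ap(S_n, s_0) = ∑_{j=1}^{m−1} α_j·s_j`, and the Frobenius number of the
numerical semigroup `(1/e)·S_n = {y/e : y ∈ S_n}` (i.e. the greatest natural
number not in it) is `∑_{j=1}^{m−1} α_j·(s_j/e) − s_0/e`. -/
theorem stmt_19 (a c d n : ℕ) (ha : 2 ≤ a) (hc : 0 < c) (hd : 0 < d)
    (hdca : d < c * a) (hda : Nat.Coprime d a) (hdc : Nat.Coprime d c) (hn : 0 < n)
    (s : ℕ → ℕ) (hs : ∀ j, s j = c * a ^ (n + j) - d)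
    (R : ℕ → ℕ) (hR : ∀ j, R j = (a ^ j - 1) / (a - 1))
    (e : ℕ)
    (he1 : ∀ x ∈ AddSubmonoid.closure (Set.range s), e ∣ x)
    (he2 : ∀ k : ℕ, (∀ x ∈ AddSubmonoid.closure (Set.range s), k ∣ x) → k ∣ e)
    (m : ℕ) (hm2 : 2 ≤ m)
    (hm : edim (AddSubmonoid.closure (Set.range s)) = m)
    (α : Fin (m - 1) → ℕ) (hα : IsResidual a α)
    (hα0 : s 0 / e = 1 + ∑ i : Fin (m - 1), α i * R ((i : ℕ) + 1)) :
    IsGreatest (apery (AddSubmonoid.closure (Set.range s)) (s 0))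
        (∑ i : Fin (m - 1), α i * s ((i : ℕ) + 1)) ∧
      IsGreatest
        {x : ℕ | x ∉ {y : ℕ | ∃ z ∈ AddSubmonoid.closure (Set.range s), y = z / e}}
        ((∑ i : Fin (m - 1), α i * (s ((i : ℕ) + 1) / e)) - s 0 / e) := by
  have ha1 : 1 ≤ a - 1 := by omega
  set S : AddSubmonoid ℕ := AddSubmonoid.closure (Set.range s) with hS
  -- basic facts about R
  have hRmul : ∀ j, (a - 1) * R j = a ^ j - 1 := by
    intro j
    have hdvd : (a - 1) ∣ a ^ j - 1 := by
      have := Nat.sub_dvd_pow_sub_pow a 1 j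
      simpa using this
    rw [hR j]
    exact Nat.mul_div_cancel' hdvd
  have hapow : ∀ j : ℕ, 1 ≤ a ^ j := fun j => Nat.one_le_pow _ _ (by omega)
  have hpow : ∀ j, a ^ j = (a - 1) * R j + 1 := by
    intro j
    have h1 := hRmul j
    have h2 := hapow j
    omega
  have hR0 : R 0 = 0 := by
    have := hRmul 0
    simp at this
    omega
  have hRrec : ∀ j, R (j + 1) = a * R j + 1 := by
    intro j
    have h1 : (a - 1) * (a * R j + 1) = a ^ (j + 1) - 1 := by
      have h2 := hRmul j
      have h3 := hapow j
      have h4 : (a - 1) * (a * R j + 1) = a * ((a - 1) * R j) + (a - 1) := by ring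
      have h5 : a * (a ^ j - 1) = a * a ^ j - a := by rw [Nat.mul_sub, mul_one]
      have h6 : a ^ (j + 1) = a * a ^ j := by rw [pow_succ]; ring
      have h7 : a ≤ a * a ^ j := Nat.le_mul_of_pos_right a (by omega)
      have h8 : a * ((a - 1) * R j) = a * (a ^ j - 1) := by rw [h2]
      omega
    exact Nat.eq_of_mul_eq_mul_left (by omega : 0 < a - 1)
      (by rw [hRmul (j + 1), h1])
  have hR1 : R 1 = 1 := by have := hRrec 0; simp [hR0] at this; omega
  -- basic facts about s
  have hca : ∀ j, c * a ≤ c * a ^ j → True := fun _ _ => trivial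
  have hdle : ∀ k : ℕ, 1 ≤ k → d ≤ c * a ^ k := by
    intro k hk
    have h1 : a ≤ a ^ k := by
      calc a = a ^ 1 := (pow_one a).symm
      _ ≤ a ^ k := Nat.pow_le_pow_right (by omega) hk
    have h2 : c * a ≤ c * a ^ k := Nat.mul_le_mul_left c h1
    omega
  have hs0 : s 0 + d = c * a ^ n := by
    have h1 := hs 0
    rw [Nat.add_zero] at h1
    have h2 := hdle n hn
    omega
  have hs0pos : 0 < s 0 := by
    have h1 : a ≤ a ^ n := by
      calc a = a ^ 1 := (pow_one a).symm
      _ ≤ a ^ n := Nat.pow_le_pow_right (by omega) hn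
    have h2 : c * a ≤ c * a ^ n := Nat.mul_le_mul_left c h1
    omega
  have hsj : ∀ j, s j = s 0 * a ^ j + ((a - 1) * d) * R j := by
    intro j
    have key : s 0 * a ^ j + ((a - 1) * d) * R j + d = c * a ^ (n + j) := by
      have e1 : ((a - 1) * d) * R j = ((a - 1) * R j) * d := by ring
      rw [e1, hRmul j]
      have h3 : 1 ≤ a ^ j := hapow j
      have e2 : (a ^ j - 1) * d + d = a ^ j * d := by
        rw [Nat.sub_mul, one_mul]
        have hd' : d ≤ a ^ j * d := Nat.le_mul_of_pos_left d (by omega)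
        omega
      rw [add_assoc, e2]
      calc s 0 * a ^ j + a ^ j * d = (s 0 + d) * a ^ j := by ring
      _ = c * a ^ n * a ^ j := by rw [hs0]
      _ = c * a ^ (n + j) := by rw [pow_add]; ring
    have h4 : d ≤ c * a ^ (n + j) := hdle (n + j) (by omega)
    have h5 := hs j
    omega
  have spos : ∀ j, 0 < s j := by
    intro j
    rw [hsj j]
    have := Nat.mul_pos hs0pos (show 0 < a ^ j by have := hapow j; omega)
    omega
  have hgenS : ∀ j, s j ∈ S := fun j => AddSubmonoid.subset_closure ⟨j, rfl⟩
  have hes : ∀ j, e ∣ s j := fun j => he1 (s j) (hgenS j)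
  have epos : 0 < e := by
    rcases Nat.eq_zero_or_pos e with rfl | h
    · have := hes 0
      simp at this
      omega
    · exact h
  have cop_d_s0 : Nat.Coprime d (s 0) := by
    have h1 : Nat.Coprime d (c * a ^ n) := hdc.mul_right (hda.pow_right n)
    have h2 : Nat.gcd d (s 0) = 1 := by
      rw [← Nat.gcd_add_self_right d (s 0), hs0]
      exact h1
    exact h2
  have cop_s0_d : Nat.Coprime (s 0) d := cop_d_s0.symm
  have cop_e_d : Nat.Coprime e d := Nat.Coprime.coprime_dvd_left (hes 0) cop_s0_d
  have e_dvd_ad : e ∣ (a - 1) * d := by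
    have h1 : (a - 1) * d = s 1 - a * s 0 := by
      have h2 := hsj 1
      rw [hR1, pow_one] at h2
      have : s 0 * a = a * s 0 := by ring
      omega
    rw [h1]
    exact Nat.dvd_sub (hes 1) ((hes 0).mul_left a)
  have e_dvd_am1 : e ∣ a - 1 := Nat.Coprime.dvd_of_dvd_mul_right cop_e_d e_dvd_ad
  have g_dvd : ∀ x ∈ S, Nat.gcd (s 0) (a - 1) ∣ x := by
    intro x hx
    obtain ⟨M, rfl⟩ := mem_closure_rep hx
    apply Multiset.dvd_sum
    intro y hy
    obtain ⟨j, _, rfl⟩ := Multiset.mem_map.mp hy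
    rw [hsj j]
    refine Dvd.dvd.add ?_ ?_
    · exact Dvd.dvd.mul_right (Nat.gcd_dvd_left _ _) _
    · exact Dvd.dvd.mul_right (Dvd.dvd.mul_right (Nat.gcd_dvd_right _ _) _) _
  have e_eq : Nat.gcd (s 0) (a - 1) = e :=
    Nat.dvd_antisymm (he2 _ g_dvd) (Nat.dvd_gcd (hes 0) e_dvd_am1)
  have gcd_ad : Nat.gcd (s 0) ((a - 1) * d) = e := by
    apply Nat.dvd_antisymm
    · have h1 : Nat.Coprime (Nat.gcd (s 0) ((a - 1) * d)) d :=
        Nat.Coprime.coprime_dvd_left (Nat.gcd_dvd_left _ _) cop_s0_d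
      have h2 : Nat.gcd (s 0) ((a - 1) * d) ∣ a - 1 :=
        Nat.Coprime.dvd_of_dvd_mul_right h1 (Nat.gcd_dvd_right _ _)
      rw [← e_eq]
      exact Nat.dvd_gcd (Nat.gcd_dvd_left _ _) h2
    · exact Nat.dvd_gcd (hes 0) e_dvd_ad
  -- the key quantities
  set K0 : ℕ := ∑ i : Fin (m - 1), α i * R ((i : ℕ) + 1) with hK0
  set SA : ℕ := ∑ i : Fin (m - 1), α i with hSAdef
  set Pα : ℕ := ∑ i : Fin (m - 1), α i * a ^ ((i : ℕ) + 1) with hPαdef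
  set w : ℕ := ∑ i : Fin (m - 1), α i * s ((i : ℕ) + 1) with hwdef
  have hqe : s 0 = e * (K0 + 1) := by
    have h1 : e * (s 0 / e) = s 0 := Nat.mul_div_cancel' (hes 0)
    rw [hα0] at h1
    have h2 : e * (1 + K0) = e * (K0 + 1) := by ring
    omega
  -- the digit function of α
  set A : ℕ → ℕ := fun j => if h : 1 ≤ j ∧ j < m then α ⟨j - 1, by omega⟩ else 0 with hAdef
  have hA0 : A 0 = 0 := by rw [hAdef]; simp
  have hAsupp : ∀ j, m ≤ j → A j = 0 := by
    intro j hj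
    rw [hAdef]
    have : ¬ (1 ≤ j ∧ j < m) := by omega
    simp only [this, dite_false]
  have hA_sum : ∀ f : ℕ → ℕ,
      ∑ j ∈ Finset.range m, A j * f j = ∑ i : Fin (m - 1), α i * f ((i : ℕ) + 1) := by
    intro f
    have h1 : ∑ i : Fin (m - 1), α i * f ((i : ℕ) + 1)
        = ∑ j ∈ Finset.range (m - 1),
            (fun k => (if h : k < m - 1 then α ⟨k, h⟩ else 0) * f (k + 1)) j := by
      rw [← Fin.sum_univ_eq_sum_range]
      apply Finset.sum_congr rfl
      intro i _
      simp only [i.isLt, dite_true, Fin.eta]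
    have hrange : Finset.range m = Finset.range ((m - 1) + 1) := by
      congr 1; omega
    rw [h1, hrange, Finset.sum_range_succ', hA0]
    simp only [Nat.zero_mul, mul_zero, add_zero]
    apply Finset.sum_congr rfl
    intro j hj
    have hjm : j < m - 1 := by simpa using hj
    simp only [hAdef]
    have hcond : 1 ≤ j + 1 ∧ j + 1 < m := ⟨by omega, by omega⟩
    rw [dif_pos hcond, dif_pos hjm]
    congr 1
  have hAres : ResD a A := by
    refine ⟨hA0, ?_, ?_⟩
    · intro j
      simp only [hAdef]
      split
      · exact hα.1 _
      · exact Nat.zero_le a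
    · intro j hj2 hja i hi
      simp only [hAdef] at hja
      by_cases hcond : 1 ≤ j ∧ j < m
      · rw [dif_pos hcond] at hja
        rcases Nat.eq_zero_or_pos i with rfl | hi1
        · exact hA0
        · simp only [hAdef]
          have hcondi : 1 ≤ i ∧ i < m := ⟨hi1, by omega⟩
          rw [dif_pos hcondi]
          exact hα.2 ⟨j - 1, by omega⟩ ⟨i - 1, by omega⟩ hja (by simp; omega)
            (by rw [Fin.mk_lt_mk]; omega)
      · rw [dif_neg hcond] at hja
        omega
  have hK0A : ∑ j ∈ Finset.range m, A j * R j = K0 := hA_sum R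
  have hSAA : ∑ j ∈ Finset.range m, A j = SA := by
    have := hA_sum (fun _ => 1)
    simpa using this
  -- K0 is positive (else the embedding dimension would be 1)
  have hK0pos : 1 ≤ K0 := by
    by_contra hK0z
    have hK0z' : K0 = 0 := by omega
    have hs0e : s 0 = e := by rw [hqe, hK0z']; ring
    have s0_dvd : ∀ j, s 0 ∣ s j := by
      intro j
      rw [hsj j]
      refine Dvd.dvd.add (Dvd.dvd.mul_right dvd_rfl _) ?_
      have h1 : s 0 ∣ a - 1 := by rw [hs0e]; exact e_dvd_am1
      exact Dvd.dvd.mul_right (Dvd.dvd.mul_right h1 _) _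
    have hminsub : minGens S ⊆ {s 0} := by
      rintro x ⟨hxS, hxne, hxind⟩
      obtain ⟨M, rfl⟩ := mem_closure_rep hxS
      rcases eq_or_ne M 0 with rfl | hMne
      · simp at hxne
      obtain ⟨j, hj⟩ := Multiset.exists_mem_of_ne_zero hMne
      obtain ⟨M1, rfl⟩ := Multiset.exists_cons_of_mem hj
      rcases eq_or_ne M1 0 with rfl | hM1ne
      · -- x = s j
        have hxsj : ((j ::ₘ (0 : Multiset ℕ)).map s).sum = s j := by simp
        rcases Nat.eq_zero_or_pos j with rfl | hjpos
        · simp [hxsj]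
        · exfalso
          obtain ⟨k, hk⟩ := s0_dvd j
          have hsge : 2 * s 0 ≤ s j := by
            have h1 : a ≤ a ^ j := Nat.le_self_pow (by omega) a
            have h2 : s 0 * a ≤ s 0 * a ^ j := Nat.mul_le_mul_left _ h1
            have h3 : 2 * s 0 ≤ s 0 * a := by
              have := Nat.mul_le_mul_left (s 0) ha
              omega
            have h4 := hsj j
            omega
          have hk2 : 2 ≤ k := by
            rcases Nat.lt_or_ge k 2 with hk' | hk'
            · interval_cases k <;> omega
            · exact hk'
          have hdec : s j = s 0 + s 0 * (k - 1) := by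
            have h5 : s 0 * k = s 0 * (k - 1) + s 0 := by
              have h6 : k - 1 + 1 = k := by omega
              calc s 0 * k = s 0 * ((k - 1) + 1) := by rw [h6]
              _ = s 0 * (k - 1) + s 0 := by ring
            omega
          refine hxind ⟨s 0, hgenS 0,
            s 0 * (k - 1), ?_, by omega, ?_, by rw [hxsj, hdec]⟩
          · have h7 : (k - 1) • s 0 ∈ S := nsmul_mem (hgenS 0) (k - 1)
            rwa [smul_eq_mul, mul_comm] at h7
          · have : 0 < s 0 * (k - 1) := Nat.mul_pos hs0pos (by omega)
            omega
      · -- at least two summands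
        exfalso
        obtain ⟨j2, hj2⟩ := Multiset.exists_mem_of_ne_zero hM1ne
        have hpos2 : 0 < (M1.map s).sum := by
          have h1 : s j2 ∈ M1.map s := Multiset.mem_map_of_mem s hj2
          have h2 : s j2 ≤ (M1.map s).sum :=
            Multiset.single_le_sum (fun y _ => Nat.zero_le y) _ h1
          have := spos j2
          omega
        refine hxind ⟨s j, hgenS j, (M1.map s).sum,
          rep_mem_closure s M1, by have := spos j; omega, by omega, ?_⟩
        rw [Multiset.map_cons, Multiset.sum_cons]
    have hcard : (minGens S).ncard ≤ 1 := by
      have h1 := Set.ncard_le_ncard hminsub (Set.finite_singleton (s 0))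
      rwa [Set.ncard_singleton] at h1
    have hedim : edim S = (minGens S).ncard := rfl
    omega
  have hSA1 : 1 ≤ SA := by
    by_contra hSA0
    have h0 : ∀ i ∈ (Finset.univ : Finset (Fin (m - 1))), α i = 0 := by
      have h1 : SA = 0 := by omega
      rw [hSAdef] at h1
      intro i hi
      exact (Finset.sum_eq_zero_iff.mp h1) i hi
    have h2 : K0 = 0 := by
      rw [hK0]
      apply Finset.sum_eq_zero
      intro i hi
      rw [h0 i hi]
      ring
    omega
  have hSA_le : SA ≤ K0 := by
    rw [hSAdef, hK0]
    apply Finset.sum_le_sum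
    intro i _
    have h1 : 1 ≤ R ((i : ℕ) + 1) := by have := hRrec (i : ℕ); omega
    calc α i = α i * 1 := by ring
    _ ≤ α i * R ((i : ℕ) + 1) := Nat.mul_le_mul_left _ h1
  have hPα : Pα = (a - 1) * K0 + SA := by
    rw [hPαdef]
    calc ∑ i : Fin (m - 1), α i * a ^ ((i : ℕ) + 1)
        = ∑ i : Fin (m - 1), ((a - 1) * (α i * R ((i : ℕ) + 1)) + α i) := by
          apply Finset.sum_congr rfl
          intro i _
          rw [hpow ((i : ℕ) + 1)]
          ring
    _ = (a - 1) * K0 + SA := by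
          rw [Finset.sum_add_distrib, ← Finset.mul_sum, hK0, hSAdef]
  have hw : w = s 0 * Pα + ((a - 1) * d) * K0 := by
    rw [hwdef]
    calc ∑ i : Fin (m - 1), α i * s ((i : ℕ) + 1)
        = ∑ i : Fin (m - 1), (s 0 * (α i * a ^ ((i : ℕ) + 1))
            + ((a - 1) * d) * (α i * R ((i : ℕ) + 1))) := by
          apply Finset.sum_congr rfl
          intro i _
          rw [hsj ((i : ℕ) + 1)]
          ring
    _ = s 0 * Pα + ((a - 1) * d) * K0 := by
          rw [Finset.sum_add_distrib, ← Finset.mul_sum, ← Finset.mul_sum, hPαdef, hK0]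
  have hw2 : 2 * s 0 ≤ w := by
    have h1 : 2 ≤ Pα := by
      have h2 : K0 ≤ (a - 1) * K0 := Nat.le_mul_of_pos_left K0 (by omega)
      omega
    have h3 : s 0 * 2 ≤ s 0 * Pα := Nat.mul_le_mul_left _ h1
    omega
  -- KEY LEMMA: every element of S congruent to w mod s 0 is at least w
  have key_lower : ∀ y ∈ S, y % s 0 = w % s 0 → w ≤ y := by
    intro y hy hmod
    obtain ⟨M, rfl⟩ := mem_closure_rep hy
    have hdec := rep_decomp R a (s 0) ((a - 1) * d) s hsj M
    have hP := pow_decomp R a hpow M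
    set K : ℕ := (M.map R).sum with hKdef
    set P : ℕ := (M.map (a ^ ·)).sum with hPdef
    have hmod1 : ((a - 1) * d * K) % s 0 = ((a - 1) * d * K0) % s 0 := by
      have h1 : (M.map s).sum % s 0 = ((a - 1) * d * K) % s 0 := by
        rw [hdec, Nat.mul_add_mod]
      have h2 : w % s 0 = ((a - 1) * d * K0) % s 0 := by
        rw [hw, Nat.mul_add_mod]
      rw [← h1, hmod, h2]
    have hKmod : K ≡ K0 [MOD K0 + 1] := by
      have h3 : K ≡ K0 [MOD s 0 / Nat.gcd (s 0) ((a - 1) * d)] :=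
        Nat.ModEq.cancel_left_div_gcd hs0pos hmod1
      rw [gcd_ad] at h3
      have h4 : s 0 / e = K0 + 1 := by
        rw [hqe]
        exact Nat.mul_div_cancel_left _ epos
      rwa [h4] at h3
    have hcases : K = K0 ∨ 2 * K0 + 1 ≤ K := by
      rcases lt_trichotomy K K0 with hlt | heq | hgt
      · exfalso
        have h5 : (K0 + 1) ∣ K0 - K := (Nat.modEq_iff_dvd' (le_of_lt hlt)).mp hKmod
        have h6 := Nat.le_of_dvd (by omega) h5
        omega
      · exact Or.inl heq
      · right
        have h5 : (K0 + 1) ∣ K - K0 := (Nat.modEq_iff_dvd' (le_of_lt hgt)).mp hKmod.symm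
        have h6 := Nat.le_of_dvd (by omega) h5
        omega
    rcases hcases with heq | hbig
    · -- K = K0 : use minimality of the residual digit sum
      have hSAcard : SA ≤ Multiset.card M := by
        set M0 : Multiset ℕ := M.filter (fun j => 1 ≤ j) with hM0def
        have hfpos : ∀ j ∈ M0, 1 ≤ j := fun j hj => (Multiset.mem_filter.mp hj).2
        have hfval : (M0.map R).sum = K := by
          have hsplit := Multiset.filter_add_not (fun j : ℕ => 1 ≤ j) M
          have h7 : ((M.filter (fun j : ℕ => ¬ 1 ≤ j)).map R).sum = 0 := by
            apply Multiset.sum_eq_zero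
            intro y hy'
            obtain ⟨j, hjmem, rfl⟩ := Multiset.mem_map.mp hy'
            have := (Multiset.mem_filter.mp hjmem).2
            have hj0 : j = 0 := by omega
            rw [hj0, hR0]
          have h8 : ((M0 + M.filter (fun j : ℕ => ¬ 1 ≤ j)).map R).sum = K := by
            rw [hsplit]
          rw [Multiset.map_add, Multiset.sum_add, h7] at h8
          omega
        have hfcard : Multiset.card M0 ≤ Multiset.card M :=
          Multiset.card_le_card (Multiset.filter_le _ M)
        obtain ⟨h, N, hres, hsupp, hval, hcard⟩ :=
          exists_resD_of_rep R ha hR0 hRrec M0.sum M0 le_rfl hfpos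
        have hhA : ∀ j, h j = A j := by
          apply resD_unique R ha hR0 hRrec (max N m) h A hres hAres
            (fun j hj => hsupp j (le_trans (le_max_left _ _) hj))
            (fun j hj => hAsupp j (le_trans (le_max_right _ _) hj))
          rw [sum_ext hsupp (le_max_left N m) R, sum_ext hAsupp (le_max_right N m) R,
            hval, hK0A, hfval, heq]
        have hdig : ∑ j ∈ Finset.range N, h j = ∑ j ∈ Finset.range m, A j := by
          rw [← sum_ext0 hsupp (le_max_left N m), ← sum_ext0 hAsupp (le_max_right N m)]
          exact Finset.sum_congr rfl (fun j _ => hhA j)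
        rw [hSAA] at hdig
        omega
      have h8 : Pα ≤ P := by
        rw [hPα, hP, heq]
        omega
      have h9 : s 0 * Pα ≤ s 0 * P := Nat.mul_le_mul_left _ h8
      have h10 : (a - 1) * d * K = (a - 1) * d * K0 := by rw [heq]
      omega
    · -- K ≥ 2*K0 + 1
      have h8 : Pα ≤ P := by
        have f1 : (a - 1) * (2 * K0 + 1) ≤ (a - 1) * K := Nat.mul_le_mul_left _ hbig
        have f2 : (a - 1) * (2 * K0 + 1) = (a - 1) * K0 + (a - 1) * K0 + (a - 1) := by ring
        have f3 : K0 ≤ (a - 1) * K0 := Nat.le_mul_of_pos_left K0 (by omega)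
        rw [hPα, hP]
        omega
      have h9 : s 0 * Pα ≤ s 0 * P := Nat.mul_le_mul_left _ h8
      have h10 : (a - 1) * d * K0 ≤ (a - 1) * d * K := Nat.mul_le_mul_left _ (by omega)
      omega
  -- small representatives in every class
  have small_class_rep : ∀ K', K' ≤ K0 →
      ∃ v, v ∈ S ∧ v ≤ w ∧ v % s 0 = ((a - 1) * d * K') % s 0 := by
    intro K' hK'
    obtain ⟨D, hDf, hDc, hDm⟩ := digits_multiset A m
    have hDval : (D.map R).sum = K0 := by rw [hDf R, hK0A]
    have hDcard : Multiset.card D = SA := by rw [hDc, hSAA]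
    have hDpos : ∀ x ∈ D, 1 ≤ x := by
      intro x hx
      have h1 := (hDm x hx).1
      rcases Nat.eq_zero_or_pos x with rfl | h
      · exact absurd hA0 h1
      · exact h
    obtain ⟨M, hMpos, hMval, hMcard⟩ :=
      exists_decrement R ha hR0 hRrec (K0 - K') D hDpos (by omega)
    have hval' : (M.map R).sum = K' := by omega
    have hdec := rep_decomp R a (s 0) ((a - 1) * d) s hsj M
    rw [hval'] at hdec
    refine ⟨(M.map s).sum, rep_mem_closure s M, ?_, ?_⟩
    · have hP := pow_decomp R a hpow M
      rw [hval'] at hP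
      have hsplit : (a - 1) * K' + (a - 1) * (K0 - K') = (a - 1) * K0 := by
        rw [← Nat.mul_add]
        congr 1
        omega
      have h8 : (M.map (a ^ ·)).sum ≤ Pα := by
        rw [hPα]
        omega
      have h9 : s 0 * (M.map (a ^ ·)).sum ≤ s 0 * Pα := Nat.mul_le_mul_left _ h8
      have h10 : (a - 1) * d * K' ≤ (a - 1) * d * K0 := Nat.mul_le_mul_left _ hK'
      omega
    · rw [hdec, Nat.mul_add_mod]
  -- Apéry elements are minimal in their class
  have apery_min : ∀ u, u ∈ apery S (s 0) → ∀ v ∈ S, u % s 0 = v % s 0 → u ≤ v := by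
    intro u hu v hv hmod
    by_contra hvu
    push_neg at hvu
    have hdvd : s 0 ∣ u - v := (Nat.modEq_iff_dvd' (le_of_lt hvu)).mp hmod.symm
    obtain ⟨t, ht⟩ := hdvd
    have ht1 : 1 ≤ t := by
      rcases Nat.eq_zero_or_pos t with rfl | h
      · simp at ht; omega
      · exact h
    have hmem : v + s 0 * (t - 1) ∈ S := by
      have h7 : (t - 1) • s 0 ∈ S := nsmul_mem (hgenS 0) (t - 1)
      rw [smul_eq_mul] at h7
      have h8 : v + (t - 1) * s 0 ∈ S := add_mem hv h7
      rwa [mul_comm] at h8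
    refine hu.2 ⟨v + s 0 * (t - 1), hmem, ?_⟩
    have hst : s 0 * t = s 0 + s 0 * (t - 1) := by
      have h6 : (t - 1) + 1 = t := by omega
      calc s 0 * t = s 0 * ((t - 1) + 1) := by rw [h6]
      _ = s 0 + s 0 * (t - 1) := by ring
    omega
  constructor
  · -- first IsGreatest
    constructor
    · refine ⟨?_, ?_⟩
      · rw [hwdef]
        refine sum_mem ?_
        intro i _
        have h7 := nsmul_mem (hgenS ((i : ℕ) + 1)) (α i)
        rwa [smul_eq_mul] at h7
      · rintro ⟨z, hz, hwz⟩
        have hzmod : z % s 0 = w % s 0 := by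
          rw [hwz]
          exact (Nat.add_mod_left _ _).symm
        have := key_lower z hz hzmod
        omega
    · intro u hu
      obtain ⟨M, hMrep⟩ := mem_closure_rep hu.1
      set K : ℕ := (M.map R).sum with hKdef
      have hK' : K % (K0 + 1) ≤ K0 := by
        have := Nat.mod_lt K (show 0 < K0 + 1 by omega)
        omega
      obtain ⟨v, hvS, hvw, hvmod⟩ := small_class_rep (K % (K0 + 1)) hK'
      have humod : u % s 0 = ((a - 1) * d * K) % s 0 := by
        rw [hMrep, rep_decomp R a (s 0) ((a - 1) * d) s hsj M, Nat.mul_add_mod]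
      have hKq : K % (K0 + 1) ≡ K [MOD K0 + 1] := Nat.mod_modEq K (K0 + 1)
      have hmul : (a - 1) * d * (K % (K0 + 1)) ≡ (a - 1) * d * K [MOD s 0] := by
        have h1 : ((a - 1) * d / e) * (K % (K0 + 1)) ≡ ((a - 1) * d / e) * K [MOD K0 + 1] :=
          hKq.mul_left _
        have h2 := Nat.ModEq.mul_left' (c := e) h1
        have h3 : e * ((a - 1) * d / e) = (a - 1) * d := Nat.mul_div_cancel' e_dvd_ad
        rw [← mul_assoc, ← mul_assoc, h3, ← hqe] at h2
        exact h2
      have huv : u % s 0 = v % s 0 := by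
        rw [humod, hvmod]
        exact hmul.symm
      exact le_trans (apery_min u hu v hvS huv) hvw
  · -- second IsGreatest (Frobenius number)
    have hW'e : e * (∑ i : Fin (m - 1), α i * (s ((i : ℕ) + 1) / e)) = w := by
      rw [hwdef, Finset.mul_sum]
      apply Finset.sum_congr rfl
      intro i _
      calc e * (α i * (s ((i : ℕ) + 1) / e)) = α i * (e * (s ((i : ℕ) + 1) / e)) := by ring
      _ = α i * s ((i : ℕ) + 1) := by rw [Nat.mul_div_cancel' (hes _)]
    have hs0e' : e * (s 0 / e) = s 0 := Nat.mul_div_cancel' (hes 0)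
    have heF : e * ((∑ i : Fin (m - 1), α i * (s ((i : ℕ) + 1) / e)) - s 0 / e) = w - s 0 := by
      rw [Nat.mul_sub, hW'e, hs0e']
    set F : ℕ := (∑ i : Fin (m - 1), α i * (s ((i : ℕ) + 1) / e)) - s 0 / e with hFdef
    constructor
    · -- F is not in S/e
      intro hmem
      obtain ⟨z, hz, hFz⟩ := hmem
      have hze : e ∣ z := he1 z hz
      have hzval : z = w - s 0 := by
        have h1 : e * (z / e) = z := Nat.mul_div_cancel' hze
        rw [← hFz] at h1
        omega
      have h2 : z + s 0 = w := by omega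
      have hzmod : z % s 0 = w % s 0 := by
        rw [← h2, Nat.add_mod_right]
      have := key_lower z hz hzmod
      omega
    · intro x hx
      by_contra hFx
      push_neg at hFx
      apply hx
      have copu : Nat.Coprime ((a - 1) * d / e) (K0 + 1) := by
        have h1 := Nat.coprime_div_gcd_div_gcd (m := s 0) (n := (a - 1) * d)
          (by rw [gcd_ad]; omega)
        rw [gcd_ad] at h1
        have h2 : s 0 / e = K0 + 1 := by
          rw [hqe]
          exact Nat.mul_div_cancel_left _ epos
        rw [h2] at h1
        exact h1.symm
      obtain ⟨K', hK'lt, hK'mod⟩ := exists_mul_modEq (K0 + 1) (by omega) _ copu x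
      obtain ⟨v, hvS, hvw, hvmod⟩ := small_class_rep K' (by omega)
      have hmul : (a - 1) * d * K' ≡ e * x [MOD s 0] := by
        have h2 := Nat.ModEq.mul_left' (c := e) hK'mod
        have h3 : e * ((a - 1) * d / e) = (a - 1) * d := Nat.mul_div_cancel' e_dvd_ad
        rw [← mul_assoc, h3, ← hqe] at h2
        exact h2
      have hyv_mod : (e * x) % s 0 = v % s 0 := by
        rw [hvmod]
        exact hmul.symm
      have hylb : w - s 0 + e ≤ e * x := by
        have h4 : F + 1 ≤ x := hFx
        have h5 : e * (F + 1) ≤ e * x := Nat.mul_le_mul_left _ h4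
        have h6 : e * (F + 1) = e * F + e := by ring
        omega
      have hvy : v ≤ e * x := by
        by_contra hyv
        push_neg at hyv
        have hdvd : s 0 ∣ v - e * x := (Nat.modEq_iff_dvd' (le_of_lt hyv)).mp hyv_mod
        have h7 := Nat.le_of_dvd (by omega) hdvd
        omega
      have hdvd2 : s 0 ∣ e * x - v := (Nat.modEq_iff_dvd' hvy).mp hyv_mod.symm
      obtain ⟨t, ht⟩ := hdvd2
      have hmem : e * x ∈ S := by
        have h7 : t • s 0 ∈ S := nsmul_mem (hgenS 0) t
        rw [smul_eq_mul] at h7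
        have h8 : v + t * s 0 ∈ S := add_mem hvS h7
        have h9 : e * x = v + t * s 0 := by
          have h10 : s 0 * t = t * s 0 := by ring
          omega
        rwa [← h9] at h8
      exact ⟨e * x, hmem, (Nat.mul_div_cancel_left x epos).symm⟩
end
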